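/- arXiv:1309.7885 — 7 statements merged into one kernel-verified Lean document; each statement's English description precedes it below -/
import Mathlib

section
/- Let 1 ≤ p < q ≤ ∞. There exists a positive constant c, depending only on p and q, such that for all m, n ∈ ℕ with log₂ m ≤ n ≤ m, the identity embedding id : ℓ_p^m → ℓ_q^m satisfies e_n(id) ≥ c·(log₂(m/n + 1)/n)^{1/p − 1/q} (with the convention 1/∞ = 0). -/
open Metric Set
open scoped ENNReal

/-- The `n`-th (dyadic) entropy number of a bounded linear operator `T : X → Y`:
the infimum of all `ε > 0` such that the image of the closed unit ball of `X`
can be covered by `2 ^ (n - 1)` closed balls of radius `ε` in `Y`. -/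
noncomputable def entropyNum {X Y : Type*} [NormedAddCommGroup X] [NormedSpace ℝ X]
    [NormedAddCommGroup Y] [NormedSpace ℝ Y] (n : ℕ) (T : X →L[ℝ] Y) : ℝ :=
  sInf {ε : ℝ | 0 < ε ∧ ∃ S : Finset Y, S.card ≤ 2 ^ (n - 1) ∧
    T '' closedBall 0 1 ⊆ ⋃ y ∈ S, closedBall y ε}

/-- The `n`-th (dyadic) inner entropy number of a bounded linear operator `T : X → Y`:
the supremum of all `ε > 0` such that there are `2 ^ (n - 1) + 1` points in the closed
unit ball of `X` whose images under `T` are pairwise at distance at least `2 * ε`. -/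
noncomputable def innerEntropyNum {X Y : Type*} [NormedAddCommGroup X] [NormedSpace ℝ X]
    [NormedAddCommGroup Y] [NormedSpace ℝ Y] (n : ℕ) (T : X →L[ℝ] Y) : ℝ :=
  sSup {ε : ℝ | 0 < ε ∧ ∃ x : Fin (2 ^ (n - 1) + 1) → X, (∀ i, ‖x i‖ ≤ 1) ∧
    ∀ i j, i ≠ j → 2 * ε ≤ ‖T (x i) - T (x j)‖}

/-!
A packing bound drives everything: if `N > 2 ^ (n - 1) * M` points of the unit ball have images
of which at most `M` lie within `2 ε` of any one of them, then `2 ^ (n - 1)` balls of radius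
`< ε` cannot cover those images, so `e_n ≥ ε`. Write `α = 1/p - 1/q` and
`2 ^ w ≤ m / n < 2 ^ (w + 1)`.

* `w < 10`: the grid `(m ^ (-1/p) / 8) • {-8, …, 8} ^ m` lies in the unit ball of `ℓ_p^m`. Two grid
  points closer than `m ^ (1/q - 1/p) / 8` in `ℓ_q` differ by an integer vector of `ℓ_1`-norm `< m`,
  and each point has at most `6 ^ m` such neighbours, while `2 ^ (m - 1) * 6 ^ m < 17 ^ m`.
  Hence `e_n ≥ m ^ (-α) / 16`, which is `≳ (log₂(m/n + 1) / n) ^ α` because `m / n` is bounded.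
* `w ≥ 10`: the vectors `k ^ (-1/p) • 1_A`, `#A = k = 2 h` with `h ≈ n / w`, are
  `k ^ (-α)`-separated in `ℓ_q` unless `#(B \ A) < h`. At most `2 ^ k * Σ_{i<h} C(m, i)` sets `B`
  are that close to `A`, and since `C(m, i + 1) / C(m, i) ≥ 2 ^ (w - 1)` for `i < k`, this count
  times `2 ^ (n - 1)` stays below `C(m, k)`. Hence `e_n ≥ k ^ (-α) / 2 ≳ (w / n) ^ α`.
-/

open Finset

theorem Finset.card_le_card_mul_of_forall_dist_le {ι Y : Type*} [PseudoMetricSpace Y]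
    {I : Finset ι} {f : ι → Y} {S : Finset Y} {r : ℝ} {M : ℕ}
    (hcov : ∀ i ∈ I, ∃ y ∈ S, dist (f i) y ≤ r)
    (hM : ∀ i ∈ I, #{j ∈ I | dist (f i) (f j) ≤ 2 * r} ≤ M) : #I ≤ #S * M := by
  classical
  calc #I ≤ #(S.biUnion fun y => {i ∈ I | dist (f i) y ≤ r}) := card_le_card fun i hi => by
        obtain ⟨y, hy, hiy⟩ := hcov i hi
        exact mem_biUnion.2 ⟨y, hy, mem_filter.2 ⟨hi, hiy⟩⟩
    _ ≤ #S * M := card_biUnion_le_card_mul _ _ _ fun y _ => by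
        rcases {i ∈ I | dist (f i) y ≤ r}.eq_empty_or_nonempty with hempty | ⟨i, hi⟩
        · simp [hempty]
        rw [mem_filter] at hi
        refine (card_le_card fun j hj => ?_).trans (hM i hi.1)
        rw [mem_filter] at hj ⊢
        exact ⟨hj.1, (dist_triangle_right _ _ y).trans (by linarith [hi.2, hj.2])⟩

section Entropy

variable {X Y : Type*} [NormedAddCommGroup X] [NormedSpace ℝ X]
  [NormedAddCommGroup Y] [NormedSpace ℝ Y]

theorem entropyNum_nonneg (n : ℕ) (T : X →L[ℝ] Y) : 0 ≤ entropyNum n T :=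
  Real.sInf_nonneg fun _ hε => hε.1.le

theorem le_entropyNum_of_packing {ι : Type*} (n : ℕ) (T : X →L[ℝ] Y) (I : Finset ι) (x : ι → X)
    (hx : ∀ i ∈ I, ‖x i‖ ≤ 1) {ε : ℝ} {M : ℕ}
    (hM : ∀ i ∈ I, #{j ∈ I | ‖T (x i) - T (x j)‖ < 2 * ε} ≤ M) (hI : 2 ^ (n - 1) * M < #I) :
    ε ≤ entropyNum n T := by
  classical
  refine le_csInf ⟨‖T‖ + 1, by positivity, {0}, by simp [Nat.one_le_two_pow], ?_⟩ ?_
  · rintro _ ⟨x, hx, rfl⟩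
    simp only [Finset.mem_singleton, iUnion_iUnion_eq_left, mem_closedBall, dist_zero_right]
    exact (T.le_opNorm_of_le (mem_closedBall_zero_iff.1 hx)).trans (by linarith)
  rintro δ ⟨-, S, hS, hcov⟩
  by_contra! hδ
  have hcard : #I ≤ #S * M := by
    refine card_le_card_mul_of_forall_dist_le (f := fun i => T (x i)) (r := δ) (fun i hi => ?_)
      fun i hi => (Finset.card_le_card fun j hj => ?_).trans (hM i hi)
    · simpa using hcov ⟨x i, mem_closedBall_zero_iff.2 (hx i hi), rfl⟩
    · rw [mem_filter, dist_eq_norm] at hj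
      exact mem_filter.2 ⟨hj.1, by linarith [hj.2]⟩
  have := Nat.mul_le_mul_right M hS
  omega

end Entropy

namespace PiLp

variable {ι : Type*} [Fintype ι]

theorem norm_toLp_le_card_rpow_mul {p : ℝ≥0∞} [Fact (1 ≤ p)] (hp : p ≠ ∞) (s : Finset ι)
    {f : ι → ℝ} {C : ℝ} (hC : 0 ≤ C) (hfs : ∀ i ∉ s, f i = 0) (hfC : ∀ i ∈ s, |f i| ≤ C) :
    ‖WithLp.toLp p f‖ ≤ (#s : ℝ) ^ (1 / p.toReal) * C := by
  have hp0 : 0 < p.toReal := p.toReal_pos_iff_ne_top.2 hp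
  have hsum : ∑ i, ‖f i‖ ^ p.toReal ≤ #s * C ^ p.toReal := by
    rw [← sum_subset (subset_univ s) fun i _ hi => by simp [hfs i hi, hp0.ne'], ← nsmul_eq_mul]
    exact sum_le_card_nsmul _ _ _ fun i hi =>
      Real.rpow_le_rpow (norm_nonneg _) (hfC i hi) hp0.le
  rw [norm_eq_sum hp0]
  calc (∑ i, ‖f i‖ ^ p.toReal) ^ (1 / p.toReal) ≤ (#s * C ^ p.toReal) ^ (1 / p.toReal) :=
        Real.rpow_le_rpow (by positivity) hsum (by positivity)
    _ = (#s : ℝ) ^ (1 / p.toReal) * C := by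
        rw [Real.mul_rpow (by positivity) (by positivity), ← Real.rpow_mul hC,
          mul_one_div_cancel hp0.ne', Real.rpow_one]

theorem card_rpow_mul_le_norm {q : ℝ≥0∞} [Fact (1 ≤ q)] (g : PiLp q fun _ : ι => ℝ)
    {s : Finset ι} (hs : s.Nonempty) {β : ℝ} (hβ : 0 ≤ β) (hg : ∀ i ∈ s, β ≤ |g i|) :
    (#s : ℝ) ^ (1 / q.toReal) * β ≤ ‖g‖ := by
  rcases eq_or_ne q ∞ with rfl | hq
  · obtain ⟨i, hi⟩ := hs
    simpa using (hg i hi).trans (norm_apply_le g i)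
  have hq0 : 0 < q.toReal := q.toReal_pos_iff_ne_top.2 hq
  have hsum : #s * β ^ q.toReal ≤ ∑ i, ‖g i‖ ^ q.toReal := by
    rw [← nsmul_eq_mul]
    refine (card_nsmul_le_sum _ _ _ fun i hi => ?_).trans
      (sum_le_sum_of_subset_of_nonneg (subset_univ s) fun _ _ _ => by positivity)
    exact Real.rpow_le_rpow hβ (hg i hi) hq0.le
  rw [norm_eq_sum hq0]
  calc (#s : ℝ) ^ (1 / q.toReal) * β = (#s * β ^ q.toReal) ^ (1 / q.toReal) := by
        rw [Real.mul_rpow (by positivity) (by positivity), ← Real.rpow_mul hβ,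
          mul_one_div_cancel hq0.ne', Real.rpow_one]
    _ ≤ _ := Real.rpow_le_rpow (by positivity) hsum (by positivity)

theorem sum_natAbs_lt_of_norm_lt {q : ℝ≥0∞} [Fact (1 ≤ q)] (u : ι → ℤ) {N : ℝ} (hN : 1 ≤ N)
    (hu : ‖WithLp.toLp q fun i => (u i : ℝ)‖ < N ^ (1 / q.toReal)) :
    ∑ i, ((u i).natAbs : ℝ) < N := by
  rcases eq_or_ne q ∞ with rfl | hq
  · have hu0 : ∀ i, u i = 0 := fun i => by
      have := (norm_apply_le (WithLp.toLp ∞ fun i => (u i : ℝ)) i).trans_lt hu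
      simp only [ENNReal.toReal_top, div_zero, Real.rpow_zero, Real.norm_eq_abs,
        ← Int.cast_abs] at this
      exact Int.abs_lt_one_iff.1 (by exact_mod_cast this)
    simpa [hu0] using zero_lt_one.trans_le hN
  have hq0 : 0 < q.toReal := q.toReal_pos_iff_ne_top.2 hq
  have hq1 : 1 ≤ q.toReal := by simpa using ENNReal.toReal_mono hq (Fact.out : 1 ≤ q)
  rw [norm_eq_sum hq0, ← Real.rpow_lt_rpow_iff (by positivity) (by positivity) hq0,
    ← Real.rpow_mul (by positivity), ← Real.rpow_mul (by positivity), one_div_mul_cancel hq0.ne',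
    Real.rpow_one, Real.rpow_one] at hu
  refine lt_of_le_of_lt (sum_le_sum fun i _ => ?_) hu
  rcases eq_or_ne (u i) 0 with hi | hi
  · simp [hi, Real.zero_rpow hq0.ne']
  · simp only [Real.norm_eq_abs, Nat.cast_natAbs, Int.cast_abs]
    exact Real.self_le_rpow_of_one_le (by exact_mod_cast Int.one_le_abs hi) hq1

end PiLp

theorem Real.rpow_le_mul_rpow_neg {a b C α : ℝ} (ha : 0 ≤ a) (hb : 0 < b) (hC : 1 ≤ C)
    (hα0 : 0 ≤ α) (hα1 : α ≤ 1) (hab : a * b ≤ C) : a ^ α ≤ C * b ^ (-α) := by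
  calc a ^ α = (a * b) ^ α * b ^ (-α) := by
        rw [Real.mul_rpow ha hb.le, mul_assoc, ← Real.rpow_add hb, add_neg_cancel, Real.rpow_zero,
          mul_one]
    _ ≤ C ^ α * b ^ (-α) := by gcongr
    _ ≤ C * b ^ (-α) := by
        gcongr
        exact Real.rpow_le_self_of_one_le hC hα1

theorem ENNReal.one_div_toReal_sub_one_div_toReal_mem_Ioc {p q : ℝ≥0∞} (hp : 1 ≤ p) (hpq : p < q) :
    1 / p.toReal - 1 / q.toReal ∈ Set.Ioc 0 1 := by
  have hp1 : 1 ≤ p.toReal := by simpa using ENNReal.toReal_mono hpq.ne_top hp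
  rcases eq_or_ne q ∞ with rfl | hq
  · simpa using ⟨zero_lt_one.trans_le hp1, inv_le_one_of_one_le₀ hp1⟩
  have hpq' : p.toReal < q.toReal := ENNReal.toReal_strict_mono hq hpq
  have : 0 ≤ 1 / q.toReal := by positivity
  exact ⟨sub_pos.2 (one_div_lt_one_div_of_lt (by linarith) hpq'),
    by linarith [(div_le_one (by linarith : 0 < p.toReal)).2 hp1]⟩

theorem Real.logb_two_div_add_one_le {m n : ℕ} (hn : 0 < n) :
    Real.logb 2 ((m : ℝ) / n + 1) ≤ Nat.log 2 (m / n) + 2 := by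
  have hnR : (0 : ℝ) < n := by exact_mod_cast hn
  have hm : m < 2 ^ (Nat.log 2 (m / n) + 1) * n :=
    (Nat.div_lt_iff_lt_mul hn).1 (Nat.lt_pow_succ_log_self one_lt_two _)
  rw [Real.logb_le_iff_le_rpow one_lt_two (by positivity), Real.rpow_add two_pos,
    Real.rpow_natCast, div_add_one hnR.ne', div_le_iff₀ hnR]
  have : (m : ℝ) + 1 ≤ 2 ^ (Nat.log 2 (m / n) + 1) * n := by exact_mod_cast hm
  have : (n : ℝ) ≤ 2 ^ Nat.log 2 (m / n) * n :=
    le_mul_of_one_le_left hnR.le (one_le_pow₀ one_le_two)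
  rw [pow_succ] at *
  linarith

theorem Nat.pow_sub_mul_choose_le_choose {m r h k : ℕ} (hhk : h ≤ k)
    (hstep : ∀ i, h ≤ i → i < k → r * (i + 1) ≤ m - i) :
    r ^ (k - h) * m.choose h ≤ m.choose k := by
  induction k, hhk using Nat.le_induction with
  | base => simp
  | succ k hhk ih =>
    have hratio : r * m.choose k ≤ m.choose (k + 1) := by
      refine Nat.le_of_mul_le_mul_right ?_ k.succ_pos
      calc r * m.choose k * (k + 1) = m.choose k * (r * (k + 1)) := by ring
        _ ≤ m.choose k * (m - k) := Nat.mul_le_mul_left _ (hstep k hhk k.lt_succ_self)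
        _ = m.choose (k + 1) * (k + 1) := (Nat.choose_succ_right_eq m k).symm
    calc r ^ (k + 1 - h) * m.choose h = r * (r ^ (k - h) * m.choose h) := by
          rw [Nat.sub_add_comm hhk, pow_succ']; ring
      _ ≤ r * m.choose k := Nat.mul_le_mul_left r (ih fun i hi hik => hstep i hi (by omega))
      _ ≤ m.choose (k + 1) := hratio

theorem Finset.card_filter_card_sdiff_lt_le {α : Type*} [Fintype α] [DecidableEq α]
    (A : Finset α) (h : ℕ) :
    #{B : Finset α | #(B \ A) < h} ≤ 2 ^ #A * ∑ i ∈ range h, (Fintype.card α).choose i := by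
  calc _ ≤ #(A.powerset ×ˢ (range h).biUnion fun i => powersetCard i univ) := by
        refine card_le_card_of_injOn (fun B => (B ∩ A, B \ A)) (fun B hB => ?_)
          fun B _ C _ hBC => ?_
        · simp only [coe_filter, mem_univ, true_and, Set.mem_ofPred_eq] at hB
          simp [hB]
        · simp only [Prod.mk.injEq] at hBC
          rw [← sdiff_union_inter B A, ← sdiff_union_inter C A, hBC.1, hBC.2]
    _ ≤ _ := by
        rw [card_product, card_powerset]
        exact Nat.mul_le_mul_left _ (card_biUnion_le.trans_eq (by simp))

theorem sum_one_half_pow_natAbs_le_three (s : Finset ℤ) :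
    ∑ t ∈ s, (1 / 2 : ℝ) ^ t.natAbs ≤ 3 := by
  have hpos : HasSum (fun n : ℕ => (1 / 2 : ℝ) ^ (n : ℤ).natAbs) 2 := by
    simpa using hasSum_geometric_two
  have hneg : HasSum (fun n : ℕ => (1 / 2 : ℝ) ^ (-(n + 1 : ℤ)).natAbs) 1 := by
    have hterm (n : ℕ) : (1 / 2 : ℝ) ^ (-(n + 1 : ℤ)).natAbs = 1 / 2 * (1 / 2) ^ n := by
      rw [show (-(n + 1 : ℤ)).natAbs = n + 1 by omega, pow_succ']
    have h := hasSum_geometric_two.mul_left (1 / 2 : ℝ)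
    rw [show (1 / 2 : ℝ) * 2 = 1 by norm_num] at h
    simpa only [hterm] using h
  have hall : HasSum (fun t : ℤ => (1 / 2 : ℝ) ^ t.natAbs) (2 + 1) :=
    HasSum.of_nat_of_neg_add_one (f := fun t : ℤ => (1 / 2 : ℝ) ^ t.natAbs) hpos hneg
  exact (sum_le_hasSum s (fun _ _ => by positivity) hall).trans_eq (by norm_num)

theorem card_filter_sum_natAbs_sub_lt_le {ι : Type*} [Fintype ι] [DecidableEq ι] {K : ℕ}
    (v : ι → ℤ) (R : ℕ) :
    (#{w : ι → Fin K | ∑ i, ((w i : ℤ) - v i).natAbs < R} : ℝ) ≤ 2 ^ R * 3 ^ Fintype.card ι := by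
  -- Rankin's trick: each neighbour gets weight `2 ^ R * 2 ^ (-‖w - v‖₁) ≥ 1`, and the total
  -- weight factors over the coordinates.
  have hweight (w : ι → Fin K) (hw : ∑ i, ((w i : ℤ) - v i).natAbs < R) :
      1 ≤ 2 ^ R * ∏ i, (1 / 2 : ℝ) ^ ((w i : ℤ) - v i).natAbs := by
    rw [prod_pow_eq_pow_sum]
    set d := ∑ i, ((w i : ℤ) - v i).natAbs
    calc (1 : ℝ) = 2 ^ d * (1 / 2) ^ d := by rw [← mul_pow]; norm_num
      _ ≤ _ := mul_le_mul_of_nonneg_right (pow_le_pow_right₀ (by norm_num) hw.le) (by positivity)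
  have hcoord (b : ℤ) : ∑ a : Fin K, (1 / 2 : ℝ) ^ ((a : ℤ) - b).natAbs ≤ 3 := by
    rw [← sum_image (f := fun t : ℤ => (1 / 2 : ℝ) ^ t.natAbs) (g := fun a : Fin K => (a : ℤ) - b)
      fun a _ a' _ h => Fin.ext (by simpa using h)]
    exact sum_one_half_pow_natAbs_le_three _
  calc (#{w : ι → Fin K | ∑ i, ((w i : ℤ) - v i).natAbs < R} : ℝ)
      ≤ ∑ w : ι → Fin K, 2 ^ R * ∏ i, (1 / 2 : ℝ) ^ ((w i : ℤ) - v i).natAbs := by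
        rw [card_eq_sum_ones, Nat.cast_sum, Nat.cast_one]
        refine (sum_le_sum fun w hw => hweight w (mem_filter.1 hw).2).trans ?_
        exact sum_le_sum_of_subset_of_nonneg (subset_univ _) fun _ _ _ => by positivity
    _ = 2 ^ R * ∏ i, ∑ a : Fin K, (1 / 2 : ℝ) ^ ((a : ℤ) - v i).natAbs := by
        rw [← mul_sum, Fintype.prod_sum]
    _ ≤ 2 ^ R * 3 ^ Fintype.card ι := by
        gcongr
        exact (prod_le_prod (fun _ _ => by positivity) fun i _ => hcoord (v i)).trans_eq (by simp)

theorem two_pow_mul_sum_choose_lt_choose {m n h w : ℕ} (hhn : 2 * h ≤ n)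
    (hnh : n + 3 * h ≤ w * h) (hm : 2 ^ (w + 1) * n ≤ m) :
    2 ^ (n - 1) * (2 ^ (2 * h) * ∑ i ∈ range h, m.choose i) < m.choose (2 * h) := by
  have hnm : n ≤ m := (Nat.le_mul_of_pos_left n (by positivity)).trans hm
  have hsum : ∑ i ∈ range h, m.choose i ≤ h * m.choose h := by
    refine (sum_le_card_nsmul _ _ _ fun i hi => ?_).trans_eq (by rw [card_range, smul_eq_mul])
    simpa using Nat.pow_sub_mul_choose_le_choose (r := 1) (mem_range.1 hi).le
      fun j _ hj => by omega
  have hratio : 2 ^ (w * h) * m.choose h ≤ m.choose (2 * h) := by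
    have := Nat.pow_sub_mul_choose_le_choose (r := 2 ^ w) (m := m) (by omega : h ≤ 2 * h)
      fun i _ hi => by
        have h1 : 2 ^ w * (i + 1) ≤ 2 ^ w * n := Nat.mul_le_mul_left _ (by omega)
        have h2 : n ≤ 2 ^ w * n := Nat.le_mul_of_pos_left n (by positivity)
        rw [pow_succ] at hm
        apply Nat.le_sub_of_add_le
        linarith
    rwa [show 2 * h - h = h by omega, ← pow_mul] at this
  calc 2 ^ (n - 1) * (2 ^ (2 * h) * ∑ i ∈ range h, m.choose i)
      ≤ 2 ^ (n - 1) * (2 ^ (2 * h) * (h * m.choose h)) := by gcongr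
    _ < 2 ^ (n - 1) * (2 ^ (2 * h) * (2 ^ h * m.choose h)) := by
        gcongr
        · exact Nat.choose_pos (by omega)
        · exact Nat.lt_two_pow_self
    _ = 2 ^ (n - 1 + 3 * h) * m.choose h := by ring
    _ ≤ 2 ^ (w * h) * m.choose h := by gcongr <;> omega
    _ ≤ m.choose (2 * h) := hratio

theorem exists_subset_half_size {n w : ℕ} (hw : 10 ≤ w) (hwn : w ≤ n) :
    ∃ h, 0 < h ∧ 2 * h ≤ n ∧ n + 3 * h ≤ (w - 1) * h ∧ 2 * h * (w + 2) ≤ 8 * n := by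
  obtain ⟨e, rfl⟩ : ∃ e, w = e + 10 := ⟨w - 10, by omega⟩
  have hle : (e + 6) * (n / (e + 6)) ≤ n := Nat.mul_div_le n (e + 6)
  have hlt : n < (e + 6) * (n / (e + 6) + 1) := Nat.lt_mul_div_succ n (by omega)
  have hsix : n / (e + 6) ≤ n / 6 := Nat.div_le_div_left (by omega) (by norm_num)
  refine ⟨n / (e + 6) + 1, Nat.succ_pos _, by omega, ?_, ?_⟩
  · rw [show e + 10 - 1 = (e + 6) + 3 by omega, add_mul]
    omega
  · nlinarith

section Identity

variable {p q : ℝ≥0∞} [Fact (1 ≤ p)] [Fact (1 ≤ q)] {m : ℕ}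
  {T : PiLp p (fun _ : Fin m => ℝ) →L[ℝ] PiLp q (fun _ : Fin m => ℝ)}

theorem le_entropyNum_of_grid (hT : ∀ x i, T x i = x i) (hp : p ≠ ∞) (hm : 0 < m) {n : ℕ}
    (hnm : n ≤ m) : (m : ℝ) ^ (1 / q.toReal - 1 / p.toReal) / 16 ≤ entropyNum n T := by
  classical
  have hmR : (0 : ℝ) < m := by exact_mod_cast hm
  set δ : ℝ := (m : ℝ) ^ (-(1 / p.toReal)) / 8 with hδ
  have hδ0 : 0 < δ := by positivity
  let x : (Fin m → Fin 17) → PiLp p (fun _ : Fin m => ℝ) :=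
    fun v => WithLp.toLp p fun i => δ * ((v i : ℝ) - 8)
  have hdiff (v w : Fin m → Fin 17) : T (x w) - T (x v) =
      δ • WithLp.toLp q fun i => (((w i : ℤ) - v i : ℤ) : ℝ) := by
    ext i
    simp only [PiLp.sub_apply, hT, Int.cast_sub, Int.cast_natCast, PiLp.smul_apply, smul_eq_mul, x]
    ring
  refine le_entropyNum_of_packing n T univ x (M := 6 ^ m) (fun v _ => ?_) (fun v _ => ?_) ?_
  · calc ‖x v‖ ≤ (#(univ : Finset (Fin m)) : ℝ) ^ (1 / p.toReal) * (8 * δ) :=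
          PiLp.norm_toLp_le_card_rpow_mul hp univ (by positivity) (by simp) fun i _ => by
            rw [abs_mul, abs_of_pos hδ0, mul_comm]
            gcongr
            rw [abs_le]
            have : ((v i : ℕ) : ℝ) ≤ 16 := by exact_mod_cast (v i).is_le
            constructor <;> linarith
      _ = 1 := by
          rw [card_univ, Fintype.card_fin, hδ, mul_div_cancel₀ _ (by norm_num : (8 : ℝ) ≠ 0),
            ← Real.rpow_add hmR, add_neg_cancel, Real.rpow_zero]
  · calc #{w ∈ univ | ‖T (x v) - T (x w)‖ < 2 * ((m : ℝ) ^ (1 / q.toReal - 1 / p.toReal) / 16)}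
        ≤ #{w : Fin m → Fin 17 | ∑ i, ((w i : ℤ) - (v i : ℕ)).natAbs < m} :=
          Finset.card_le_card fun w hw => by
            rw [mem_filter, norm_sub_rev, hdiff, norm_smul, Real.norm_of_nonneg hδ0.le,
              sub_eq_add_neg, Real.rpow_add hmR] at hw
            have hlt := hw.2.trans_eq (by rw [hδ]; ring : _ = δ * (m : ℝ) ^ (1 / q.toReal))
            have := PiLp.sum_natAbs_lt_of_norm_lt (q := q) (fun i => (w i : ℤ) - v i) (N := m)
              (by exact_mod_cast hm) (lt_of_mul_lt_mul_left hlt hδ0.le)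
            exact mem_filter.2 ⟨mem_univ _, by exact_mod_cast this⟩
      _ ≤ 6 ^ m := by
        have := card_filter_sum_natAbs_sub_lt_le (K := 17) (fun i => (v i : ℕ)) m
        rw [Fintype.card_fin, ← mul_pow] at this
        exact_mod_cast this.trans_eq (by norm_num : ((2 : ℝ) * 3) ^ m = 6 ^ m)
  · calc 2 ^ (n - 1) * 6 ^ m ≤ 2 ^ m * 6 ^ m := by gcongr <;> omega
      _ = 12 ^ m := by rw [← mul_pow]; norm_num
      _ < #(univ : Finset (Fin m → Fin 17)) := by
          simp only [card_univ, Fintype.card_fun, Fintype.card_fin]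
          exact Nat.pow_lt_pow_left (by norm_num) hm.ne'

theorem le_entropyNum_of_subsets (hT : ∀ x i, T x i = x i) (hp : p ≠ ∞) {n k h : ℕ} (hk : 0 < k)
    (hkh : k ≤ 2 * h) (hcount : 2 ^ (n - 1) * (2 ^ k * ∑ i ∈ range h, m.choose i) < m.choose k) :
    (k : ℝ) ^ (1 / q.toReal - 1 / p.toReal) / 2 ≤ entropyNum n T := by
  classical
  have hkR : (0 : ℝ) < k := by exact_mod_cast hk
  set β : ℝ := (k : ℝ) ^ (-(1 / p.toReal)) with hβ
  have hβ0 : 0 < β := by positivity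
  let x : Finset (Fin m) → PiLp p (fun _ : Fin m => ℝ) :=
    fun A => WithLp.toLp p fun i => if i ∈ A then β else 0
  have hsep (A B : Finset (Fin m)) (hA : #A = k) (hB : #B = k) (hBA : h ≤ #(B \ A)) :
      (k : ℝ) ^ (1 / q.toReal) * β ≤ ‖T (x A) - T (x B)‖ := by
    have hsymm : k ≤ #(A \ B ∪ B \ A) := by
      rw [card_union_of_disjoint disjoint_sdiff_sdiff, card_sdiff_comm (hA.trans hB.symm)]
      omega
    refine le_trans ?_ (PiLp.card_rpow_mul_le_norm _ (card_pos.1 (hk.trans_le hsymm)) hβ0.le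
      fun i hi => ?_)
    · gcongr
    · rcases mem_union.1 hi with hi | hi <;> rw [Finset.mem_sdiff] at hi <;>
        simp [hT, x, hi, abs_of_pos hβ0]
  refine le_entropyNum_of_packing n T (powersetCard k univ) x
    (M := 2 ^ k * ∑ i ∈ range h, m.choose i) (fun A hA => ?_) (fun A hA => ?_) ?_
  · rw [mem_powersetCard] at hA
    calc ‖x A‖ ≤ (#A : ℝ) ^ (1 / p.toReal) * β :=
          PiLp.norm_toLp_le_card_rpow_mul hp A hβ0.le (by simp +contextual)
            fun i hi => by simp [hi, abs_of_pos hβ0]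
      _ = 1 := by rw [hA.2, hβ, ← Real.rpow_add hkR, add_neg_cancel, Real.rpow_zero]
  · rw [mem_powersetCard] at hA
    refine (Finset.card_le_card fun B hB => ?_).trans
      ((card_filter_card_sdiff_lt_le A h).trans ?_)
    · rw [mem_filter, mem_powersetCard] at hB
      rw [mem_filter]
      refine ⟨mem_univ _, not_le.1 fun hBA => hB.2.not_ge ?_⟩
      calc 2 * ((k : ℝ) ^ (1 / q.toReal - 1 / p.toReal) / 2) = (k : ℝ) ^ (1 / q.toReal) * β := by
            rw [sub_eq_add_neg, Real.rpow_add hkR]; ring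
        _ ≤ _ := hsep A B hA.2 hB.1.2 hBA
    · rw [hA.2, Fintype.card_fin]
  · simpa [card_powersetCard] using hcount

theorem logb_rpow_le_entropyNum_of_log_lt_ten (hT : ∀ x i, T x i = x i) (hpq : p < q) {n : ℕ}
    (hn : 0 < n) (hnm : n ≤ m) (hw : Nat.log 2 (m / n) < 10) :
    1 / 2 ^ 18 * (Real.logb 2 ((m : ℝ) / n + 1) / n) ^ (1 / p.toReal - 1 / q.toReal)
      ≤ entropyNum n T := by
  obtain ⟨hα0, hα1⟩ := ENNReal.one_div_toReal_sub_one_div_toReal_mem_Ioc Fact.out hpq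
  have hm : 0 < m := hn.trans_le hnm
  have hnR : (0 : ℝ) < n := by exact_mod_cast hn
  have hmR : (0 : ℝ) < m := by exact_mod_cast hm
  have hmn : (m : ℝ) < 2 ^ 10 * n := by
    exact_mod_cast (Nat.div_lt_iff_lt_mul hn).1
      ((Nat.lt_pow_succ_log_self one_lt_two (m / n)).trans_le (Nat.pow_le_pow_right two_pos hw))
  have hL : Real.logb 2 ((m : ℝ) / n + 1) ≤ 11 := by
    have hw' : (Nat.log 2 (m / n) : ℝ) ≤ 9 := by exact_mod_cast Nat.le_of_lt_succ hw
    linarith [Real.logb_two_div_add_one_le (m := m) hn]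
  have hL0 : 0 ≤ Real.logb 2 ((m : ℝ) / n + 1) :=
    Real.logb_nonneg one_lt_two (by linarith [div_nonneg hmR.le hnR.le])
  have hLm : Real.logb 2 ((m : ℝ) / n + 1) / n * m ≤ 2 ^ 14 := by
    rw [div_mul_eq_mul_div, div_le_iff₀ hnR]
    nlinarith
  calc 1 / 2 ^ 18 * (Real.logb 2 ((m : ℝ) / n + 1) / n) ^ (1 / p.toReal - 1 / q.toReal)
      ≤ 1 / 2 ^ 18 * (2 ^ 14 * (m : ℝ) ^ (-(1 / p.toReal - 1 / q.toReal))) := by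
        gcongr
        exact Real.rpow_le_mul_rpow_neg (by positivity) hmR (by norm_num) hα0.le hα1 hLm
    _ = (m : ℝ) ^ (1 / q.toReal - 1 / p.toReal) / 16 := by rw [neg_sub]; ring
    _ ≤ entropyNum n T := le_entropyNum_of_grid hT hpq.ne_top hm hnm

theorem logb_rpow_le_entropyNum_of_ten_le_log (hT : ∀ x i, T x i = x i) (hpq : p < q) {n : ℕ}
    (hn : 0 < n) (hlog : Real.logb 2 m ≤ n) (hw : 10 ≤ Nat.log 2 (m / n)) :
    1 / 2 ^ 18 * (Real.logb 2 ((m : ℝ) / n + 1) / n) ^ (1 / p.toReal - 1 / q.toReal)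
      ≤ entropyNum n T := by
  obtain ⟨hα0, hα1⟩ := ENNReal.one_div_toReal_sub_one_div_toReal_mem_Ioc Fact.out hpq
  have hnR : (0 : ℝ) < n := by exact_mod_cast hn
  have hmn : m / n ≠ 0 := fun h0 => by simp [h0] at hw
  set w := Nat.log 2 (m / n)
  have hwn : w ≤ n := by
    have : (w : ℝ) ≤ Real.logb 2 m :=
      (Nat.cast_le.2 (Nat.log_mono_right (Nat.div_le_self m n))).trans (Real.natLog_le_logb m 2)
    exact_mod_cast this.trans hlog
  have hwm : 2 ^ (w - 1 + 1) * n ≤ m := by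
    rw [Nat.sub_add_cancel (by omega : 1 ≤ w)]
    exact (Nat.le_div_iff_mul_le hn).1 (Nat.pow_log_le_self 2 hmn)
  obtain ⟨h, hh, hhn, hnh, hhw⟩ := exists_subset_half_size hw hwn
  have hkL : Real.logb 2 ((m : ℝ) / n + 1) / n * ((2 * h : ℕ) : ℝ) ≤ 8 := by
    have hhw' : ((2 * h : ℕ) : ℝ) * (w + 2) ≤ 8 * n := by exact_mod_cast hhw
    rw [div_mul_eq_mul_div, div_le_iff₀ hnR]
    nlinarith [Real.logb_two_div_add_one_le (m := m) hn, (Nat.cast_nonneg (2 * h) : (0 : ℝ) ≤ _)]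
  calc 1 / 2 ^ 18 * (Real.logb 2 ((m : ℝ) / n + 1) / n) ^ (1 / p.toReal - 1 / q.toReal)
      ≤ 1 / 2 ^ 18 * (8 * ((2 * h : ℕ) : ℝ) ^ (-(1 / p.toReal - 1 / q.toReal))) := by
        gcongr
        refine Real.rpow_le_mul_rpow_neg (div_nonneg (Real.logb_nonneg one_lt_two ?_) hnR.le)
          (by positivity) (by norm_num) hα0.le hα1 hkL
        linarith [div_nonneg (Nat.cast_nonneg m) hnR.le]
    _ ≤ ((2 * h : ℕ) : ℝ) ^ (1 / q.toReal - 1 / p.toReal) / 2 := by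
        rw [neg_sub]
        have : (0 : ℝ) ≤ ((2 * h : ℕ) : ℝ) ^ (1 / q.toReal - 1 / p.toReal) := by positivity
        linarith
    _ ≤ entropyNum n T := le_entropyNum_of_subsets hT hpq.ne_top (by omega) le_rfl
          (two_pow_mul_sum_choose_lt_choose hhn hnh hwm)

end Identity

/-- Lower estimate for the entropy numbers of `id : ℓ_p^m → ℓ_q^m` in the regime
`log₂ m ≤ n ≤ m`. -/
theorem schuett_lower (p q : ℝ≥0∞) [Fact (1 ≤ p)] [Fact (1 ≤ q)] (hpq : p < q) :
    ∃ c : ℝ, 0 < c ∧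
      ∀ (m n : ℕ), Real.logb 2 m ≤ (n : ℝ) → n ≤ m →
        ∀ T : PiLp p (fun _ : Fin m => ℝ) →L[ℝ] PiLp q (fun _ : Fin m => ℝ),
          (∀ x i, T x i = x i) →
          c * (Real.logb 2 ((m : ℝ) / n + 1) / n) ^ (1 / p.toReal - 1 / q.toReal)
            ≤ entropyNum n T := by
  refine ⟨1 / 2 ^ 18, by norm_num, fun m n hlog hnm T hT => ?_⟩
  rcases Nat.eq_zero_or_pos n with rfl | hn
  · have hα := (ENNReal.one_div_toReal_sub_one_div_toReal_mem_Ioc Fact.out hpq).1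
    rw [Nat.cast_zero, div_zero, Real.zero_rpow hα.ne', mul_zero]
    exact entropyNum_nonneg 0 T
  rcases lt_or_ge (Nat.log 2 (m / n)) 10 with hw | hw
  · exact logb_rpow_le_entropyNum_of_log_lt_ten hT hpq hn hnm hw
  · exact logb_rpow_le_entropyNum_of_ten_le_log hT hpq hn hlog hw
end

section
/- Let m ∈ ℕ. Then there is a set Γ(m) of sequences (ε₁, …, ε_m) with every ε_i ∈ (0,1], having the following properties: (i) the cardinality of Γ(m) is at most 2^{5m/2}; (ii) for every (ε₁, …, ε_m) ∈ Γ(m), each m·ε_i is a positive integer, Σ_{i=1}^m ε_i ≤ 3, and for every t > 0 the number of indices i ∈ {1, …, m} with ε_i ≥ t is at most 2/t; (iii) for every sequence (α₁, …, α_m) with each α_i ∈ [0,1] and Σ_{i=1}^m α_i = 1 there exists (ε₁, …, ε_m) ∈ Γ(m) such that α_i ≤ ε_i for all i ∈ {1, …, m}. -/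
/-!
Take `Γ(m) = {k / m : 1 ≤ kᵢ ≤ m, ∑ kᵢ ≤ 2m}`. Rounding `m αᵢ` up to an integer `kᵢ ≥ 1`
costs at most `1` per coordinate, so `∑ kᵢ ≤ 2m` and `α ≤ k / m`. Appending the block
`2m + 1 - ∑ kᵢ` turns `k` into a composition of `2m + 1`, and there are only
`2^(2m) ≤ 2^(5m/2)` of those. The tail bound is Markov's inequality for `∑ εᵢ ≤ 2`.
-/

open Finset

theorem card_le_two_pow_of_pos_of_sum_le {m n : ℕ} (S : Finset (Fin m → ℕ))
    (hpos : ∀ k ∈ S, ∀ i, 0 < k i) (hsum : ∀ k ∈ S, ∑ i, k i ≤ n) : #S ≤ 2 ^ n := by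
  let toComposition (k : S) : Composition (n + 1) :=
    { blocks := List.ofFn k.1 ++ [n + 1 - ∑ i, k.1 i]
      blocks_pos := by
        intro b hb
        simp only [List.mem_append, List.mem_ofFn, List.mem_singleton] at hb
        rcases hb with ⟨i, rfl⟩ | rfl
        · exact hpos k k.2 i
        · have := hsum k k.2
          omega
      blocks_sum := by
        have := hsum k k.2
        simp only [List.sum_append, List.sum_ofFn, List.sum_singleton]
        omega }
  have h_inj : Function.Injective toComposition := by
    intro k k' h
    have h_blocks := (List.append_inj (congrArg Composition.blocks h) (by simp)).1
    exact Subtype.ext (List.ofFn_injective h_blocks)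
  calc #S = Fintype.card S := (Fintype.card_coe S).symm
    _ ≤ Fintype.card (Composition (n + 1)) := Fintype.card_le_of_injective _ h_inj
    _ = 2 ^ n := composition_card _

theorem card_filter_le_le_sum_div {ι : Type*} (s : Finset ι) (f : ι → ℝ)
    (hf : ∀ i ∈ s, 0 ≤ f i) {t : ℝ} (ht : 0 < t) :
    (#{i ∈ s | t ≤ f i} : ℝ) ≤ (∑ i ∈ s, f i) / t := by
  rw [le_div_iff₀ ht]
  calc (#{i ∈ s | t ≤ f i} : ℝ) * t = #{i ∈ s | t ≤ f i} • t := (nsmul_eq_mul _ _).symm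
    _ ≤ ∑ i ∈ s with t ≤ f i, f i := card_nsmul_le_sum _ _ _ fun i hi => (mem_filter.1 hi).2
    _ ≤ ∑ i ∈ s, f i := sum_le_sum_of_subset_of_nonneg (filter_subset _ _) fun i hi _ => hf i hi

def gammaNumerators (m : ℕ) : Finset (Fin m → ℕ) :=
  {k ∈ Fintype.piFinset fun _ => Icc 1 m | ∑ i, k i ≤ 2 * m}

noncomputable def gamma (m : ℕ) : Finset (Fin m → ℝ) :=
  (gammaNumerators m).image fun k i => (k i : ℝ) / m

theorem mem_gammaNumerators {m : ℕ} {k : Fin m → ℕ} :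
    k ∈ gammaNumerators m ↔ (∀ i, 1 ≤ k i ∧ k i ≤ m) ∧ ∑ i, k i ≤ 2 * m := by
  simp [gammaNumerators]

theorem card_gammaNumerators_le (m : ℕ) : #(gammaNumerators m) ≤ 2 ^ (2 * m) :=
  card_le_two_pow_of_pos_of_sum_le _ (fun _ hk i => ((mem_gammaNumerators.1 hk).1 i).1)
    fun _ hk => (mem_gammaNumerators.1 hk).2

theorem card_gamma_le (m : ℕ) : (#(gamma m) : ℝ) ≤ 2 ^ (5 * (m : ℝ) / 2) :=
  calc (#(gamma m) : ℝ) ≤ (2 ^ (2 * m) : ℕ) := by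
        exact_mod_cast card_image_le.trans (card_gammaNumerators_le m)
    _ = (2 : ℝ) ^ (2 * (m : ℝ)) := by norm_cast
    _ ≤ 2 ^ (5 * (m : ℝ) / 2) :=
        Real.rpow_le_rpow_of_exponent_le one_le_two (by linarith [m.cast_nonneg (α := ℝ)])

theorem gamma_spec {m : ℕ} {ε : Fin m → ℝ} (hε : ε ∈ gamma m) :
    (∀ i, 0 < ε i ∧ ε i ≤ 1) ∧ (∀ i, ∃ k : ℕ, 0 < k ∧ (m : ℝ) * ε i = k) ∧
      ∑ i, ε i ≤ 2 := by
  obtain ⟨k, hk, rfl⟩ := mem_image.1 hε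
  obtain ⟨hk_bounds, hk_sum⟩ := mem_gammaNumerators.1 hk
  refine ⟨fun i => ?_, fun i => ⟨k i, (hk_bounds i).1, ?_⟩, ?_⟩
  · have hm : (0 : ℝ) < m := by exact_mod_cast i.pos
    have hk_pos : (0 : ℝ) < k i := by exact_mod_cast (hk_bounds i).1
    exact ⟨by positivity, div_le_one_of_le₀ (by exact_mod_cast (hk_bounds i).2) hm.le⟩
  · have hm : (m : ℝ) ≠ 0 := by exact_mod_cast i.pos.ne'
    field_simp
  · rw [← sum_div]
    exact div_le_of_le_mul₀ m.cast_nonneg zero_le_two (by exact_mod_cast hk_sum)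

theorem exists_mem_gammaNumerators_le {m : ℕ} (α : Fin m → ℝ) (h0 : ∀ i, 0 ≤ α i)
    (h1 : ∀ i, α i ≤ 1) (hsum : ∑ i, α i ≤ 1) :
    ∃ k ∈ gammaNumerators m, ∀ i, m * α i ≤ k i := by
  set k : Fin m → ℕ := fun i => max 1 ⌈m * α i⌉₊
  have hk_le : ∀ i, (k i : ℝ) ≤ m * α i + 1 := fun i => by
    have hmα := mul_nonneg m.cast_nonneg (h0 i)
    simp only [k, Nat.cast_max, Nat.cast_one, max_le_iff]
    exact ⟨by linarith, (Nat.ceil_lt_add_one hmα).le⟩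
  refine ⟨k, mem_gammaNumerators.2 ⟨fun i => ⟨le_max_left _ _, max_le i.pos ?_⟩, ?_⟩, ?_⟩
  · exact Nat.ceil_le.2 (mul_le_of_le_one_right m.cast_nonneg (h1 i))
  · have : (∑ i, k i : ℝ) ≤ 2 * m :=
      calc (∑ i, k i : ℝ) ≤ ∑ i, (m * α i + 1) := sum_le_sum fun i _ => hk_le i
        _ = m * ∑ i, α i + m := by simp [sum_add_distrib, mul_sum]
        _ ≤ 2 * m := by nlinarith [m.cast_nonneg (α := ℝ)]
    exact_mod_cast this
  · exact fun i => (Nat.le_ceil _).trans (by exact_mod_cast le_max_right _ _)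

/-- Lemma 2.2: for every `m` there is a family `Γ(m)` of sequences in `(0,1]^m`,
of cardinality at most `2^(5m/2)`, whose entries are positive integer multiples of `1/m`,
with sum at most `3`, satisfying the distribution estimate `#{i : ε i ≥ t} ≤ 2/t`,
and majorizing every nonnegative sequence of sum `1`. -/
theorem exists_Gamma (m : ℕ) :
    ∃ Γ : Finset (Fin m → ℝ),
      (Γ.card : ℝ) ≤ 2 ^ ((5 * (m : ℝ)) / 2) ∧
      (∀ ε ∈ Γ,
        (∀ i, 0 < ε i ∧ ε i ≤ 1) ∧
        (∀ i, ∃ k : ℕ, 0 < k ∧ (m : ℝ) * ε i = k) ∧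
        (∑ i, ε i ≤ 3) ∧
        (∀ t : ℝ, 0 < t →
          ((Finset.univ.filter (fun i : Fin m => t ≤ ε i)).card : ℝ) ≤ 2 / t)) ∧
      (∀ α : Fin m → ℝ, (∀ i, 0 ≤ α i ∧ α i ≤ 1) → (∑ i, α i) = 1 →
        ∃ ε ∈ Γ, ∀ i, α i ≤ ε i) := by
  refine ⟨gamma m, card_gamma_le m, fun ε hε => ?_, fun α hα hsum => ?_⟩
  · obtain ⟨h_bounds, h_int, h_sum⟩ := gamma_spec hε
    refine ⟨h_bounds, h_int, h_sum.trans (by norm_num), fun t ht => ?_⟩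
    calc _ ≤ (∑ i, ε i) / t := card_filter_le_le_sum_div _ _ (fun i _ => (h_bounds i).1.le) ht
      _ ≤ 2 / t := by gcongr
  · obtain ⟨k, hk, hαk⟩ :=
      exists_mem_gammaNumerators_le α (fun i => (hα i).1) (fun i => (hα i).2) hsum.le
    refine ⟨_, mem_image_of_mem _ hk, fun i => ?_⟩
    rw [le_div_iff₀ (by exact_mod_cast i.pos), mul_comm]
    exact hαk i
end

section
/- Let m ∈ ℕ and 1 ≤ p < ∞, and let X₁, …, X_m be Banach spaces. Then there exists a family Γ of at most 2^{5m/2} sequences (ε₁, …, ε_m) with every ε_i ∈ (0,1] and Σ_{i=1}^m ε_i ≤ 3, such that the closed unit ball of ℓ_p^m({X_i}) is contained in the union over (ε₁, …, ε_m) ∈ Γ of the product sets Π_{i=1}^m ε_i^{1/p}·B_{X_i}, where B_{X_i} is the closed unit ball of X_i. -/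
open Metric Set
open scoped ENNReal

private lemma two_pow_sum' (n : ℕ) : ∑ k ∈ Finset.range (n+1), 2 ^ (n - k) ≤ 2 ^ (n+1) := by
  induction n with
  | zero => simp
  | succ n ih =>
    rw [Finset.sum_range_succ']
    simp only [Nat.succ_sub_succ, Nat.sub_zero]
    have h2 : 2 ^ (n + 1 + 1) = 2 * 2 ^ (n + 1) := by ring
    omega

private lemma count_le' (m n : ℕ) :
    ((Fintype.piFinset fun _ : Fin m => Finset.range (n+1)).filter
      fun b => ∑ i, b i ≤ n).card ≤ 2 ^ (m + n) := by
  induction m generalizing n with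
  | zero =>
    refine le_trans (Finset.card_filter_le _ _) ?_
    simpa using Nat.one_le_two_pow
  | succ m ih =>
    classical
    set T := (Fintype.piFinset fun _ : Fin (m+1) => Finset.range (n+1)).filter
      fun b => ∑ i, b i ≤ n with hT
    have hinj : Set.InjOn (fun b : Fin (m+1) → ℕ => (⟨b 0, Fin.tail b⟩ : Σ _ : ℕ, Fin m → ℕ)) T := by
      intro a _ b _ h
      simp only [Sigma.mk.inj_iff, heq_eq_eq] at h
      rw [← Fin.cons_self_tail a, ← Fin.cons_self_tail b, h.1, h.2]
    have hsub : T.image (fun b : Fin (m+1) → ℕ => (⟨b 0, Fin.tail b⟩ : Σ _ : ℕ, Fin m → ℕ)) ⊆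
        (Finset.range (n+1)).sigma fun k =>
          (Fintype.piFinset fun _ : Fin m => Finset.range ((n - k)+1)).filter
            fun b => ∑ i, b i ≤ n - k := by
      intro s hs
      simp only [Finset.mem_image] at hs
      obtain ⟨b, hb, rfl⟩ := hs
      simp only [hT, Finset.mem_filter, Fintype.mem_piFinset, Finset.mem_range] at hb
      obtain ⟨hb1, hb2⟩ := hb
      have hsum : b 0 + ∑ i, Fin.tail b i = ∑ i, b i := by
        rw [← Fin.sum_cons, Fin.cons_self_tail]
      have htail : ∀ j : Fin m, Fin.tail b j ≤ n - b 0 := by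
        intro j
        have : Fin.tail b j ≤ ∑ i, Fin.tail b i :=
          Finset.single_le_sum (fun i _ => Nat.zero_le _) (Finset.mem_univ j)
        omega
      simp only [Finset.mem_sigma, Finset.mem_range, Finset.mem_filter,
        Fintype.mem_piFinset]
      exact ⟨by omega, fun j => by have := htail j; omega, by omega⟩
    calc T.card = (T.image _).card := (Finset.card_image_of_injOn hinj).symm
      _ ≤ _ := Finset.card_le_card hsub
      _ ≤ ∑ k ∈ Finset.range (n+1), 2 ^ (m + (n - k)) := by
          rw [Finset.card_sigma]
          exact Finset.sum_le_sum fun k _ => ih (n - k)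
      _ ≤ 2 ^ (m + 1 + n) := by
          simp only [pow_add]
          rw [← Finset.mul_sum]
          calc 2^m * ∑ k ∈ Finset.range (n+1), 2^(n-k) ≤ 2^m * 2^(n+1) :=
                Nat.mul_le_mul_left _ (two_pow_sum' n)
            _ = 2^m * 2 * 2^n := by ring

/-- The unit ball of `ℓ_p^m({Xᵢ})`, `1 ≤ p < ∞`, is covered by at most `2^(5m/2)` product
sets of the form `Π i, εᵢ^(1/p) • B_{Xᵢ}` with `εᵢ ∈ (0,1]` and `Σ εᵢ ≤ 3`. -/
theorem unitBall_covered_by_products (m : ℕ) (p : ℝ≥0∞) [Fact (1 ≤ p)] (hp : p ≠ ⊤)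
    (X : Fin m → Type*) [∀ i, NormedAddCommGroup (X i)] :
    ∃ Γ : Finset (Fin m → ℝ),
      (Γ.card : ℝ) ≤ 2 ^ ((5 * (m : ℝ)) / 2) ∧
      (∀ ε ∈ Γ, (∀ i, 0 < ε i ∧ ε i ≤ 1) ∧ (∑ i, ε i ≤ 3)) ∧
      closedBall (0 : PiLp p X) 1 ⊆
        ⋃ ε ∈ Γ, {x : PiLp p X | ∀ i, ‖x i‖ ≤ ε i ^ (1 / p.toReal)} := by
  classical
  have hp1 : (1 : ℝ) ≤ p.toReal := by
    have := ENNReal.toReal_mono hp (Fact.out : (1 : ℝ≥0∞) ≤ p)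
    simpa using this
  have hp0 : (0 : ℝ) < p.toReal := lt_of_lt_of_le one_pos hp1
  set p' := p.toReal with hp'
  -- the finite index set
  set S : Finset (Fin m → ℕ) :=
    (Fintype.piFinset fun _ : Fin m => Finset.range m).filter (fun b => ∑ i, b i ≤ m) with hS
  set Γ : Finset (Fin m → ℝ) := S.image (fun b i => ((b i : ℝ) + 1) / m) with hΓ
  refine ⟨Γ, ?_, ?_, ?_⟩
  · -- cardinality bound
    have h1 : S.card ≤ 2 ^ (m + m) := by
      refine le_trans (Finset.card_le_card ?_) (count_le' m m)
      refine Finset.filter_subset_filter _ (Fintype.piFinset_subset _ _ fun i => ?_)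
      exact Finset.range_subset_range.mpr (Nat.le_succ m)
    have h2 : Γ.card ≤ 2 ^ (m + m) := le_trans Finset.card_image_le h1
    calc (Γ.card : ℝ) ≤ ((2 ^ (m + m) : ℕ) : ℝ) := by exact_mod_cast h2
      _ = (2 : ℝ) ^ ((m + m : ℕ) : ℝ) := by
          rw [Real.rpow_natCast]; push_cast; ring
      _ ≤ 2 ^ ((5 * (m : ℝ)) / 2) := by
          apply Real.rpow_le_rpow_of_exponent_le one_le_two
          push_cast; linarith
  · -- properties of ε ∈ Γ
    intro ε hε
    rw [hΓ, Finset.mem_image] at hε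
    obtain ⟨b, hbS, rfl⟩ := hε
    rw [hS, Finset.mem_filter, Fintype.mem_piFinset] at hbS
    obtain ⟨hblt, hbsum⟩ := hbS
    constructor
    · intro i
      have hm : (0 : ℝ) < m := by exact_mod_cast i.pos
      constructor
      · positivity
      · rw [div_le_one hm]
        have : b i + 1 ≤ m := by
          have := hblt i; rw [Finset.mem_range] at this; omega
        exact_mod_cast this
    · rcases Nat.eq_zero_or_pos m with hm0 | hm0
      · subst hm0; simp
      have hm : (0 : ℝ) < m := by exact_mod_cast hm0
      rw [← Finset.sum_div, div_le_iff₀ hm]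
      have : ∑ i, ((b i : ℝ) + 1) = ((∑ i, b i : ℕ) : ℝ) + m := by
        push_cast; rw [Finset.sum_add_distrib]; simp
      rw [this]
      have : ((∑ i, b i : ℕ) : ℝ) ≤ m := by exact_mod_cast hbsum
      linarith
  · -- covering
    intro x hx
    rw [mem_closedBall_zero_iff] at hx
    have hnorm : ‖x‖ = (∑ i, ‖x i‖ ^ p') ^ (1 / p') := PiLp.norm_eq_sum hp0 x
    have hSnn : (0 : ℝ) ≤ ∑ i, ‖x i‖ ^ p' :=
      Finset.sum_nonneg fun i _ => Real.rpow_nonneg (norm_nonneg _) _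
    have hsum1 : ∑ i, ‖x i‖ ^ p' ≤ 1 := by
      have h1 : (∑ i, ‖x i‖ ^ p') ^ (1 / p') ≤ 1 := hnorm ▸ hx
      have h2 := Real.rpow_le_rpow (Real.rpow_nonneg hSnn _) h1 hp0.le
      rwa [one_div, Real.rpow_inv_rpow hSnn hp0.ne', Real.one_rpow] at h2
    set t : Fin m → ℝ := fun i => ‖x i‖ ^ p' with ht
    have ht0 : ∀ i, 0 ≤ t i := fun i => Real.rpow_nonneg (norm_nonneg _) _
    have ht1 : ∀ i, t i ≤ 1 := fun i =>
      le_trans (Finset.single_le_sum (fun j _ => ht0 j) (Finset.mem_univ i)) hsum1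
    set b : Fin m → ℕ := fun i => ⌈(m : ℝ) * t i⌉₊ - 1 with hb
    have hceil_le : ∀ i, ⌈(m : ℝ) * t i⌉₊ ≤ m := by
      intro i
      rw [Nat.ceil_le]
      calc (m : ℝ) * t i ≤ (m : ℝ) * 1 := by
            apply mul_le_mul_of_nonneg_left (ht1 i) (by positivity)
        _ = m := by ring
    have hcast_le : ∀ i, (b i : ℝ) ≤ (m : ℝ) * t i := by
      intro i
      rcases Nat.eq_zero_or_pos (⌈(m : ℝ) * t i⌉₊) with h0 | h0
      · simp only [hb, h0]
        norm_num
        positivity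
      · have hlt : (⌈(m : ℝ) * t i⌉₊ : ℝ) < (m : ℝ) * t i + 1 :=
          Nat.ceil_lt_add_one (by positivity)
        have : (b i : ℝ) = (⌈(m : ℝ) * t i⌉₊ : ℝ) - 1 := by
          simp only [hb]; push_cast [Nat.cast_sub h0]; ring
        rw [this]; linarith
    have hup : ∀ i, (m : ℝ) * t i ≤ (b i : ℝ) + 1 := by
      intro i
      have h1 : ⌈(m : ℝ) * t i⌉₊ ≤ b i + 1 := by simp only [hb]; omega
      calc (m : ℝ) * t i ≤ (⌈(m : ℝ) * t i⌉₊ : ℝ) := Nat.le_ceil _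
        _ ≤ ((b i + 1 : ℕ) : ℝ) := by exact_mod_cast h1
        _ = (b i : ℝ) + 1 := by push_cast; ring
    have hbsum : ∑ i, b i ≤ m := by
      have hr : ((∑ i, b i : ℕ) : ℝ) ≤ m := by
        push_cast
        calc ∑ i, (b i : ℝ) ≤ ∑ i, (m : ℝ) * t i := Finset.sum_le_sum fun i _ => hcast_le i
          _ = (m : ℝ) * ∑ i, t i := by rw [Finset.mul_sum]
          _ ≤ (m : ℝ) * 1 := by
              apply mul_le_mul_of_nonneg_left hsum1 (by positivity)
          _ = m := by ring
      exact_mod_cast hr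
    have hbS : b ∈ S := by
      rw [hS, Finset.mem_filter, Fintype.mem_piFinset]
      refine ⟨fun i => ?_, hbsum⟩
      rw [Finset.mem_range]
      have h1 := hceil_le i
      have h2 : 0 < m := i.pos
      simp only [hb]; omega
    have hεΓ : (fun i => ((b i : ℝ) + 1) / m) ∈ Γ := by
      rw [hΓ, Finset.mem_image]
      exact ⟨b, hbS, rfl⟩
    refine Set.mem_iUnion₂.mpr ⟨_, hεΓ, fun i => ?_⟩
    have hm : (0 : ℝ) < m := by exact_mod_cast i.pos
    have htε : t i ≤ ((b i : ℝ) + 1) / m := by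
      rw [le_div_iff₀ hm]
      calc t i * m = (m : ℝ) * t i := by ring
        _ ≤ (b i : ℝ) + 1 := hup i
    have hxi : ‖x i‖ = (t i) ^ (1 / p') := by
      rw [ht, one_div, Real.rpow_rpow_inv (norm_nonneg _) hp0.ne']
    rw [hxi]
    exact Real.rpow_le_rpow (ht0 i) htε (by positivity)
end

section
/- Let m ∈ ℕ, m ≥ 2, let 1 ≤ p < q ≤ ∞ and put α = 1/p − 1/q (with the convention 1/∞ = 0). For each i ∈ {1, …, m} let X_i, Y_i be Banach spaces and T_i a bounded linear operator from X_i to Y_i. Suppose that for every i, s ∈ {1, …, m} one has e_s(T_i) ≤ (m/s)^α. Let T : ℓ_p^m({X_i}) → ℓ_q^m({Y_i}) be the diagonal operator T(x₁, …, x_m) = (T₁(x₁), …, T_m(x_m)). Then e_{5m}(T) ≤ 3^{1/q}. -/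
open Metric Set
open scoped ENNReal

/-! A point `x` of the unit ball of `ℓ_p^m` is sorted by levels: `kᵢ ∈ {1, …, m}` is the least
integer with `‖xᵢ‖^p ≤ kᵢ/m`, so that `∑ kᵢ ≤ 2m`. Rescaling a net of `2^(kᵢ-1)` points for
`Tᵢ(B)` of radius `ρ (m/kᵢ)^α` by `(kᵢ/m)^(1/p)` gives a net for `Tᵢ xᵢ` of radius
`ρ (kᵢ/m)^(1/q)`, so the product net has `ℓ_q`-radius `ρ (∑ kᵢ/m)^(1/q) ≤ ρ 2^(1/q)`.
Over all admissible level vectors these product nets have at most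
`∑ 2^(∑ kᵢ) ≤ 4^(2m) ≤ 2^(5m-1)` points in total. This even gives `e_{5m}(T) ≤ 2^(1/q)`. -/

section EntropyNum

variable {X Y : Type*} [NormedAddCommGroup X] [NormedSpace ℝ X]
  [NormedAddCommGroup Y] [NormedSpace ℝ Y] {n : ℕ} {T : X →L[ℝ] Y}

lemma entropyNum_le_of_forall_gt {a : ℝ} (ha : 0 ≤ a)
    (h : ∀ ε > a, ∃ S : Finset Y, S.card ≤ 2 ^ (n - 1) ∧
      ∀ x : X, ‖x‖ ≤ 1 → ∃ y ∈ S, ‖T x - y‖ ≤ ε) :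
    entropyNum n T ≤ a := by
  refine le_of_forall_gt_imp_ge_of_dense fun ε hε => ?_
  obtain ⟨S, hS, hcov⟩ := h ε hε
  refine csInf_le ⟨0, fun _ hr => hr.1.le⟩ ⟨ha.trans_lt hε, S, hS, ?_⟩
  rintro _ ⟨x, hx, rfl⟩
  obtain ⟨y, hy, hxy⟩ := hcov x (mem_closedBall_zero_iff.mp hx)
  exact mem_iUnion₂.mpr ⟨y, hy, mem_closedBall_iff_norm.mpr hxy⟩

lemma exists_cover_of_entropyNum_lt {ε : ℝ} (h : entropyNum n T < ε) :
    ∃ S : Finset Y, S.card ≤ 2 ^ (n - 1) ∧ ∀ x : X, ‖x‖ ≤ 1 → ∃ y ∈ S, ‖T x - y‖ ≤ ε := by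
  have hbdd : T '' closedBall 0 1 ⊆ closedBall 0 (‖T‖ + 1) := by
    rintro _ ⟨x, hx, rfl⟩
    rw [mem_closedBall_zero_iff] at hx ⊢
    linarith [T.le_opNorm_of_le hx]
  unfold entropyNum at h
  obtain ⟨r, ⟨-, S, hS, hcov⟩, hr⟩ := exists_lt_of_csInf_lt (by
    exact ⟨‖T‖ + 1, by positivity, {0}, by simp [Nat.one_le_two_pow],
      by rwa [Finset.set_biUnion_singleton]⟩) h
  refine ⟨S, hS, fun x hx => ?_⟩
  obtain ⟨y, hy, hxy⟩ := mem_iUnion₂.mp (hcov ⟨x, mem_closedBall_zero_iff.mpr hx, rfl⟩)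
  exact ⟨y, hy, (mem_closedBall_iff_norm.mp hxy).trans hr.le⟩

lemma exists_cover_smul_of_entropyNum_lt {ε c : ℝ} (h : entropyNum n T < ε) (hc : 0 < c) :
    ∃ S : Finset Y, S.card ≤ 2 ^ (n - 1) ∧
      ∀ x : X, ‖x‖ ≤ c → ∃ y ∈ S, ‖T x - y‖ ≤ c * ε := by
  classical
  obtain ⟨S, hS, hcov⟩ := exists_cover_of_entropyNum_lt h
  refine ⟨S.image (c • ·), Finset.card_image_le.trans hS, fun x hx => ?_⟩
  obtain ⟨y, hy, hxy⟩ := hcov (c⁻¹ • x) <| by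
    rwa [norm_smul, Real.norm_of_nonneg (inv_nonneg.mpr hc.le), inv_mul_le_iff₀ hc, mul_one]
  refine ⟨c • y, Finset.mem_image_of_mem _ hy, ?_⟩
  calc ‖T x - c • y‖ = c * ‖T (c⁻¹ • x) - y‖ := by
        rw [map_smul, ← norm_smul_of_nonneg hc.le, smul_sub, smul_inv_smul₀ hc.ne']
    _ ≤ c * ε := by gcongr

lemma exists_cover_rpow_of_entropyNum_le {t a b ρ : ℝ} (ht : 0 < t) (hρ : 1 < ρ)
    (h : entropyNum n T ≤ t⁻¹ ^ (a - b)) :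
    ∃ S : Finset Y, S.card ≤ 2 ^ (n - 1) ∧
      ∀ x : X, ‖x‖ ≤ t ^ a → ∃ y ∈ S, ‖T x - y‖ ≤ ρ * t ^ b := by
  obtain ⟨S, hS, hcov⟩ := exists_cover_smul_of_entropyNum_lt
    (h.trans_lt (lt_mul_of_one_lt_left (by positivity) hρ)) (Real.rpow_pos_of_pos ht a)
  have hrad : t ^ a * (ρ * t⁻¹ ^ (a - b)) = ρ * t ^ b := by
    rw [Real.inv_rpow ht.le, ← Real.rpow_neg ht.le, mul_left_comm, ← Real.rpow_add ht]
    ring_nf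
  exact ⟨S, hS, fun x hx => hrad ▸ hcov x hx⟩

end EntropyNum

namespace PiLp

variable {ι : Type*} [Fintype ι] {β : ι → Type*} [∀ i, SeminormedAddCommGroup (β i)]

lemma sum_norm_rpow_le_one {p : ℝ≥0∞} [Fact (1 ≤ p)] (hp : p ≠ ⊤) {x : PiLp p β}
    (hx : ‖x‖ ≤ 1) : ∑ i, ‖x i‖ ^ p.toReal ≤ 1 := by
  have hp0 : 0 < p.toReal := ENNReal.toReal_pos (zero_lt_one.trans_le Fact.out).ne' hp
  have hsum : ∑ i, ‖x i‖ ^ p.toReal = ‖x‖ ^ p.toReal := by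
    rw [norm_eq_sum hp0, ← Real.rpow_mul (by positivity), one_div_mul_cancel hp0.ne',
      Real.rpow_one]
  exact hsum ▸ Real.rpow_le_one (norm_nonneg x) hx hp0.le

lemma norm_le_mul_sum_rpow {q : ℝ≥0∞} [Fact (1 ≤ q)] {z : PiLp q β} {ρ : ℝ} {w : ι → ℝ}
    (hρ : 0 ≤ ρ) (hw : ∀ i, 0 ≤ w i) (hz : ∀ i, ‖z i‖ ≤ ρ * w i ^ (1 / q.toReal)) :
    ‖z‖ ≤ ρ * (∑ i, w i) ^ (1 / q.toReal) := by
  rcases eq_or_ne q ⊤ with rfl | hq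
  · simp only [ENNReal.toReal_top, div_zero, Real.rpow_zero, mul_one] at hz ⊢
    exact (norm_eq_ciSup z).trans_le (Real.iSup_le hz hρ)
  have hq0 : 0 < q.toReal := ENNReal.toReal_pos (zero_lt_one.trans_le Fact.out).ne' hq
  have hzq : ∀ i, ‖z i‖ ^ q.toReal ≤ ρ ^ q.toReal * w i := fun i => by
    calc ‖z i‖ ^ q.toReal ≤ (ρ * w i ^ (1 / q.toReal)) ^ q.toReal := by gcongr; exact hz i
      _ = ρ ^ q.toReal * w i := by
        rw [Real.mul_rpow hρ (Real.rpow_nonneg (hw i) _), ← Real.rpow_mul (hw i),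
          one_div_mul_cancel hq0.ne', Real.rpow_one]
  calc ‖z‖ = (∑ i, ‖z i‖ ^ q.toReal) ^ (1 / q.toReal) := norm_eq_sum hq0 z
    _ ≤ (ρ ^ q.toReal * ∑ i, w i) ^ (1 / q.toReal) := by
        rw [Finset.mul_sum]; gcongr with i; exact hzq i
    _ = ρ * (∑ i, w i) ^ (1 / q.toReal) := by
        rw [Real.mul_rpow (by positivity) (Finset.sum_nonneg fun i _ => hw i),
          ← Real.rpow_mul hρ, mul_one_div_cancel hq0.ne', Real.rpow_one]

end PiLp

lemma exists_levels_of_sum_le_one {ι : Type*} [Fintype ι] [DecidableEq ι] {m : ℕ} (hm : 0 < m)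
    (hι : Fintype.card ι ≤ m) {w : ι → ℝ} (hw : ∀ i, 0 ≤ w i) (hw1 : ∑ i, w i ≤ 1) :
    ∃ k ∈ Fintype.piFinset fun _ : ι => Finset.Icc 1 m,
      ∑ i, k i ≤ 2 * m ∧ ∀ i, w i ≤ k i / m := by
  have hmR : (0 : ℝ) < m := Nat.cast_pos.mpr hm
  have hwi : ∀ i, w i ≤ 1 := fun i =>
    (Finset.single_le_sum (fun j _ => hw j) (Finset.mem_univ i)).trans hw1
  refine ⟨fun i => max 1 ⌈m * w i⌉₊, Fintype.mem_piFinset.mpr fun i => ?_, ?_, fun i => ?_⟩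
  · refine Finset.mem_Icc.mpr ⟨le_max_left _ _, max_le hm (Nat.ceil_le.mpr ?_)⟩
    simpa using mul_le_mul_of_nonneg_left (hwi i) hmR.le
  · have hk : ∀ i, ((max 1 ⌈m * w i⌉₊ : ℕ) : ℝ) ≤ m * w i + 1 := fun i => by
      rw [Nat.cast_max, Nat.cast_one, max_le_iff]
      exact ⟨le_add_of_nonneg_left (mul_nonneg hmR.le (hw i)),
        (Nat.ceil_lt_add_one (mul_nonneg hmR.le (hw i))).le⟩
    have hsum : ((∑ i, max 1 ⌈m * w i⌉₊ : ℕ) : ℝ) ≤ 2 * m := by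
      rw [Nat.cast_sum]
      calc _ ≤ ∑ i, ((m : ℝ) * w i + 1) := Finset.sum_le_sum fun i _ => hk i
        _ ≤ 2 * m := by
          rw [Finset.sum_add_distrib, ← Finset.mul_sum, Finset.sum_const, Finset.card_univ,
            nsmul_one]
          have hιR : (Fintype.card ι : ℝ) ≤ m := by exact_mod_cast hι
          linarith [mul_le_of_le_one_right hmR.le hw1]
    exact_mod_cast hsum
  · rw [le_div_iff₀ hmR, mul_comm]
    exact (Nat.le_ceil _).trans (by exact_mod_cast le_max_right _ _)

lemma sum_geometric_half_Icc_le_one (m : ℕ) : ∑ s ∈ Finset.Icc 1 m, (1 / 2 : ℝ) ^ s ≤ 1 := by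
  rw [← Finset.Ico_add_one_right_eq_Icc, Finset.sum_Ico_eq_sum_range, Nat.add_sub_cancel]
  simp_rw [pow_add, pow_one, ← Finset.mul_sum]
  linarith [sum_geometric_two_le m]

lemma sum_two_pow_sum_le_four_pow {ι : Type*} [Fintype ι] [DecidableEq ι] (m N : ℕ) :
    ∑ k ∈ Fintype.piFinset (fun _ : ι => Finset.Icc 1 m) with ∑ i, k i ≤ N, 2 ^ ∑ i, k i
      ≤ 4 ^ N := by
  have hterm : ∀ k : ι → ℕ, ∑ i, k i ≤ N →
      (2 : ℝ) ^ ∑ i, k i ≤ 4 ^ N * ∏ i, (1 / 2 : ℝ) ^ k i := fun k hk => by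
    rw [Finset.prod_pow_eq_pow_sum]
    calc (2 : ℝ) ^ ∑ i, k i = 4 ^ (∑ i, k i) * (1 / 2) ^ ∑ i, k i := by
          rw [← mul_pow]; norm_num
      _ ≤ 4 ^ N * (1 / 2) ^ ∑ i, k i := by
          gcongr
          norm_num
  have hreal : ∑ k ∈ Fintype.piFinset (fun _ : ι => Finset.Icc 1 m) with ∑ i, k i ≤ N,
      (2 : ℝ) ^ ∑ i, k i ≤ 4 ^ N := by
    calc _ ≤ ∑ k ∈ Fintype.piFinset (fun _ : ι => Finset.Icc 1 m) with ∑ i, k i ≤ N,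
            4 ^ N * ∏ i, (1 / 2 : ℝ) ^ k i :=
          Finset.sum_le_sum fun k hk => hterm k (Finset.mem_filter.mp hk).2
      _ ≤ 4 ^ N * ∑ k ∈ Fintype.piFinset (fun _ : ι => Finset.Icc 1 m),
            ∏ i, (1 / 2 : ℝ) ^ k i := by
          rw [← Finset.mul_sum]
          exact mul_le_mul_of_nonneg_left (Finset.sum_le_sum_of_subset_of_nonneg
            (Finset.filter_subset _ _) fun _ _ _ => by positivity) (by positivity)
      _ = 4 ^ N * ∏ _i : ι, ∑ s ∈ Finset.Icc 1 m, (1 / 2 : ℝ) ^ s := by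
          rw [Finset.prod_univ_sum]
      _ ≤ 4 ^ N := mul_le_of_le_one_right (by positivity) <|
          Finset.prod_le_one (fun _ _ => by positivity)
            fun _ _ => sum_geometric_half_Icc_le_one m
  exact_mod_cast hreal

section Diagonal

variable {ι : Type*} [Fintype ι] [DecidableEq ι] {X Y : ι → Type*}

open scoped Classical in
noncomputable def diagonalCenters (q : ℝ≥0∞) (m : ℕ) (S : ∀ i, ℕ → Finset (Y i)) :
    Finset (PiLp q Y) :=
  ((Fintype.piFinset fun _ : ι => Finset.Icc 1 m).filter fun k => ∑ i, k i ≤ 2 * m).biUnion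
    fun k => (Fintype.piFinset fun i => S i (k i)).image (WithLp.toLp q)

lemma card_diagonalCenters_le {q : ℝ≥0∞} {m : ℕ} {S : ∀ i, ℕ → Finset (Y i)}
    (hS : ∀ i, ∀ s ∈ Finset.Icc 1 m, (S i s).card ≤ 2 ^ (s - 1)) :
    (diagonalCenters q m S).card ≤ 4 ^ (2 * m) := by
  classical
  calc (diagonalCenters q m S).card
      ≤ ∑ k ∈ Fintype.piFinset (fun _ : ι => Finset.Icc 1 m) with ∑ i, k i ≤ 2 * m,
          ∏ i, (S i (k i)).card := by
        refine Finset.card_biUnion_le.trans (Finset.sum_le_sum fun k _ => ?_)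
        exact Finset.card_image_le.trans (Fintype.card_piFinset _).le
    _ ≤ ∑ k ∈ Fintype.piFinset (fun _ : ι => Finset.Icc 1 m) with ∑ i, k i ≤ 2 * m,
          2 ^ ∑ i, k i := by
        refine Finset.sum_le_sum fun k hk => ?_
        rw [← Finset.prod_pow_eq_pow_sum]
        exact Finset.prod_le_prod' fun i _ =>
          (hS i (k i) (Fintype.mem_piFinset.mp (Finset.mem_filter.mp hk).1 i)).trans
            (Nat.pow_le_pow_right two_pos (Nat.sub_le _ 1))
    _ ≤ 4 ^ (2 * m) := sum_two_pow_sum_le_four_pow m (2 * m)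

lemma exists_mem_diagonalCenters_norm_sub_le [∀ i, SeminormedAddCommGroup (X i)]
    [∀ i, SeminormedAddCommGroup (Y i)] {p q : ℝ≥0∞} [Fact (1 ≤ p)] [Fact (1 ≤ q)]
    (hp : p ≠ ⊤) {m : ℕ} (hm : 0 < m) (hι : Fintype.card ι ≤ m) {ρ : ℝ} (hρ : 0 ≤ ρ)
    {f : ∀ i, X i → Y i} {T : PiLp p X → PiLp q Y} (hT : ∀ x i, T x i = f i (x i))
    {S : ∀ i, ℕ → Finset (Y i)}
    (hS : ∀ i, ∀ s ∈ Finset.Icc 1 m, ∀ v : X i, ‖v‖ ≤ ((s : ℝ) / m) ^ (1 / p.toReal) →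
      ∃ y ∈ S i s, ‖f i v - y‖ ≤ ρ * ((s : ℝ) / m) ^ (1 / q.toReal))
    {x : PiLp p X} (hx : ‖x‖ ≤ 1) :
    ∃ y ∈ diagonalCenters q m S, ‖T x - y‖ ≤ ρ * 2 ^ (1 / q.toReal) := by
  classical
  have hp0 : 0 < p.toReal := ENNReal.toReal_pos (zero_lt_one.trans_le Fact.out).ne' hp
  obtain ⟨k, hk, hksum, hxk⟩ := exists_levels_of_sum_le_one hm hι (fun i => by positivity)
    (PiLp.sum_norm_rpow_le_one hp hx)
  have hxk' : ∀ i, ‖x i‖ ≤ ((k i : ℝ) / m) ^ (1 / p.toReal) := fun i => by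
    rw [← Real.rpow_le_rpow_iff (norm_nonneg _) (by positivity) hp0,
      ← Real.rpow_mul (by positivity), one_div_mul_cancel hp0.ne', Real.rpow_one]
    exact hxk i
  have hk' := Fintype.mem_piFinset.mp hk
  choose y hyS hy using fun i => hS i (k i) (hk' i) (x i) (hxk' i)
  refine ⟨WithLp.toLp q y, Finset.mem_biUnion.mpr ⟨k, Finset.mem_filter.mpr ⟨hk, hksum⟩,
    Finset.mem_image_of_mem _ (Fintype.mem_piFinset.mpr hyS)⟩, ?_⟩
  have hsum : ∑ i, (k i : ℝ) / m ≤ 2 := by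
    rw [← Finset.sum_div, div_le_iff₀ (by positivity)]
    exact_mod_cast hksum
  calc ‖T x - WithLp.toLp q y‖ ≤ ρ * (∑ i, (k i : ℝ) / m) ^ (1 / q.toReal) :=
        PiLp.norm_le_mul_sum_rpow hρ (fun i => by positivity) fun i => by
          simpa [hT] using hy i
    _ ≤ ρ * 2 ^ (1 / q.toReal) := by gcongr

end Diagonal

/-- Lemma 2.3: if `e_s(Tᵢ) ≤ (m/s)^α` for all `i, s ∈ {1,…,m}` (`α = 1/p - 1/q`), then the
diagonal operator `T : ℓ_p^m({Xᵢ}) → ℓ_q^m({Yᵢ})` satisfies `e_{5m}(T) ≤ 3^(1/q)`. -/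
theorem entropy_diagonal_5m (m : ℕ) (hm : 2 ≤ m)
    (p q : ℝ≥0∞) [Fact (1 ≤ p)] [Fact (1 ≤ q)] (hpq : p < q)
    (X Y : Fin m → Type*)
    [∀ i, NormedAddCommGroup (X i)] [∀ i, NormedSpace ℝ (X i)]
    [∀ i, NormedAddCommGroup (Y i)] [∀ i, NormedSpace ℝ (Y i)]
    (Ti : ∀ i, X i →L[ℝ] Y i)
    (hTi : ∀ (i : Fin m) (s : ℕ), 1 ≤ s → s ≤ m →
      entropyNum s (Ti i) ≤ ((m : ℝ) / s) ^ (1 / p.toReal - 1 / q.toReal))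
    (T : PiLp p X →L[ℝ] PiLp q Y) (hT : ∀ x i, T x i = Ti i (x i)) :
    entropyNum (5 * m) T ≤ (3 : ℝ) ^ (1 / q.toReal) := by
  have h23 : (2 : ℝ) ^ (1 / q.toReal) ≤ 3 ^ (1 / q.toReal) := by gcongr; norm_num
  refine (entropyNum_le_of_forall_gt (by positivity) fun ε hε => ?_).trans h23
  have hρ : 1 < ε / 2 ^ (1 / q.toReal) := (one_lt_div (by positivity)).mpr hε
  have hcov : ∀ i, ∀ s ∈ Finset.Icc 1 m, ∃ S : Finset (Y i), S.card ≤ 2 ^ (s - 1) ∧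
      ∀ v : X i, ‖v‖ ≤ ((s : ℝ) / m) ^ (1 / p.toReal) →
        ∃ y ∈ S, ‖Ti i v - y‖ ≤ ε / 2 ^ (1 / q.toReal) * ((s : ℝ) / m) ^ (1 / q.toReal) :=
    fun i s hs => by
      obtain ⟨hs1, hsm⟩ := Finset.mem_Icc.mp hs
      exact exists_cover_rpow_of_entropyNum_le (by positivity) hρ
        ((hTi i s hs1 hsm).trans_eq (by rw [inv_div]))
  choose! S hScard hS using hcov
  refine ⟨diagonalCenters q m S, ?_, fun x hx => ?_⟩
  · calc (diagonalCenters q m S).card ≤ 4 ^ (2 * m) := card_diagonalCenters_le hScard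
      _ = 2 ^ (2 * (2 * m)) := (pow_mul 2 2 (2 * m)).symm
      _ ≤ 2 ^ (5 * m - 1) := Nat.pow_le_pow_right two_pos (by omega)
  · obtain ⟨y, hy, hxy⟩ := exists_mem_diagonalCenters_norm_sub_le (ne_top_of_lt hpq)
      (by omega) (by simp) (by positivity) hT hS hx
    exact ⟨y, hy, hxy.trans_eq (div_mul_cancel₀ _ (by positivity))⟩
end

section
/- Let E be a finite set and let v ∈ ℕ be such that 64e³·v ≤ #E, and let L(E,v) denote the collection of all subsets of E of cardinality v. Then there is a subcollection L(E,v,1/2) ⊆ L(E,v) with the following properties: (i) for any two distinct E₁, E₂ ∈ L(E,v,1/2) one has #(E₁ ∩ E₂) ≤ v/2; (ii) (#L(E,v,1/2))⁴ ≥ #L(E,v) = C(#E, v), where C(·,·) denotes the binomial coefficient. -/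
/-!
Split `E` into `v` disjoint blocks of `m = ⌊#E / v⌋` elements. A word `f : Fin v → Fin m` picks
one element from each block, and two such `v`-sets meet in exactly as many elements as their
words agree in coordinates. A maximal code whose words pairwise agree in at most `v / 2`
coordinates has at least `m ^ (v / 2 + 1) / 2 ^ v` words (Gilbert–Varshamov), whereas
`C(#E, v) ≤ (e (m + 1)) ^ v`; as `m + 1 > 64 e³`, the fourth power of the first bound wins.
-/

open Finset Real Fintype

lemma exists_pairwise_not_rel_dominating {β : Type*} (r : β → β → Prop) (hrefl : ∀ x, r x x)
    (hsymm : ∀ x y, r x y → r y x) (S : Finset β) :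
    ∃ F : Finset β, (F : Set β).Pairwise (fun x y => ¬ r x y) ∧ ∀ y ∈ S, ∃ x ∈ F, r x y := by
  classical
  induction S using Finset.induction_on with
  | empty => exact ⟨∅, by simp, by simp⟩
  | insert a S _ ih =>
    obtain ⟨F, hF, hcover⟩ := ih
    by_cases ha : ∃ x ∈ F, r x a
    · exact ⟨F, hF, forall_mem_insert _ _ _ |>.2 ⟨ha, hcover⟩⟩
    · push Not at ha
      refine ⟨insert a F, ?_, forall_mem_insert _ _ _ |>.2 ⟨⟨a, mem_insert_self _ _, hrefl a⟩, ?_⟩⟩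
      · rw [coe_insert]
        exact hF.insert fun b hb _ => ⟨fun hab => ha b hb (hsymm _ _ hab), ha b hb⟩
      · exact fun y hy => (hcover y hy).imp fun x hx => ⟨mem_insert_of_mem hx.1, hx.2⟩

section Agreement

variable {ι κ : Type*} [Fintype ι] [DecidableEq ι] [Fintype κ] [DecidableEq κ]

lemma card_filter_forall_mem_eq (f : ι → κ) (S : Finset ι) :
    #{g : ι → κ | ∀ i ∈ S, f i = g i} = card κ ^ (card ι - #S) := by
  have : ({g : ι → κ | ∀ i ∈ S, f i = g i} : Finset _) =
      piFinset fun i => if i ∈ S then {f i} else univ := by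
    ext g
    simp only [mem_filter, mem_univ, true_and, mem_piFinset]
    refine forall_congr' fun i => ?_
    split_ifs with hi <;> simp [hi, eq_comm]
  rw [this, card_piFinset, ← card_compl]
  simp only [apply_ite card, card_singleton, card_univ, prod_ite, prod_const_one, one_mul,
    prod_const]
  congr 2
  ext
  simp

lemma card_agreeing_at_least_le (f : ι → κ) (t : ℕ) :
    #{g : ι → κ | t ≤ #{i | f i = g i}} ≤ (card ι).choose t * card κ ^ (card ι - t) := calc
  #{g : ι → κ | t ≤ #{i | f i = g i}}
      ≤ #((univ.powersetCard t).biUnion fun S => {g : ι → κ | ∀ i ∈ S, f i = g i}) := by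
        refine card_le_card fun g hg => ?_
        obtain ⟨S, hS, hcard⟩ := exists_subset_card_eq (mem_filter.1 hg).2
        exact mem_biUnion.2 ⟨S, mem_powersetCard.2 ⟨subset_univ S, hcard⟩,
          mem_filter.2 ⟨mem_univ g, fun i hi => (mem_filter.1 (hS hi)).2⟩⟩
  _ ≤ ∑ S ∈ univ.powersetCard t, #{g : ι → κ | ∀ i ∈ S, f i = g i} := card_biUnion_le
  _ = (card ι).choose t * card κ ^ (card ι - t) := by
        rw [Finset.sum_congr rfl fun S hS => by
            rw [card_filter_forall_mem_eq, (mem_powersetCard.1 hS).2],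
          sum_const, card_powersetCard, card_univ, smul_eq_mul]

/-- Gilbert–Varshamov: the agreement-`t` balls around a maximal such code cover all words. -/
lemma exists_code_agree_lt [Nonempty κ] {t : ℕ} (ht : t ≤ card ι) :
    ∃ F : Finset (ι → κ), (∀ f ∈ F, ∀ g ∈ F, f ≠ g → #{i | f i = g i} < t) ∧
      card κ ^ t ≤ #F * (card ι).choose t := by
  obtain ⟨F, hsep, hcover⟩ := exists_pairwise_not_rel_dominating
    (fun f g : ι → κ => t ≤ #{i | f i = g i}) (fun f => by simpa using ht)
    (fun f g h => by simpa only [eq_comm] using h) univ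
  refine ⟨F, fun f hf g hg hfg => not_le.1 (hsep hf hg hfg), ?_⟩
  have hcount : card κ ^ t * card κ ^ (card ι - t) ≤
      #F * (card ι).choose t * card κ ^ (card ι - t) := calc
    card κ ^ t * card κ ^ (card ι - t) = #(univ : Finset (ι → κ)) := by
      rw [← pow_add, Nat.add_sub_cancel' ht]; simp
    _ ≤ #(F.biUnion fun f => {g : ι → κ | t ≤ #{i | f i = g i}}) :=
      card_le_card fun g _ => mem_biUnion.2 <|
        (hcover g (mem_univ g)).imp fun f hf => ⟨hf.1, mem_filter.2 ⟨mem_univ g, hf.2⟩⟩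
    _ ≤ ∑ f ∈ F, #{g : ι → κ | t ≤ #{i | f i = g i}} := card_biUnion_le
    _ ≤ #F * (card ι).choose t * card κ ^ (card ι - t) := by
      rw [mul_assoc, ← smul_eq_mul]
      exact sum_le_card_nsmul _ _ _ fun f _ => card_agreeing_at_least_le f t
  exact Nat.le_of_mul_le_mul_right hcount (pow_pos card_pos _)

end Agreement

section Graph

variable {ι κ : Type*} [Fintype ι] [DecidableEq ι] [DecidableEq κ]

def graphFinset (f : ι → κ) : Finset (ι × κ) :=
  univ.image fun i => (i, f i)

@[simp] lemma mem_graphFinset {f : ι → κ} {p : ι × κ} : p ∈ graphFinset f ↔ f p.1 = p.2 := by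
  simp [graphFinset, Prod.ext_iff, eq_comm]

lemma graphFinset_injective : Function.Injective (graphFinset : (ι → κ) → Finset (ι × κ)) := by
  intro f g h
  funext i
  have : (i, f i) ∈ graphFinset g := h ▸ mem_graphFinset.2 rfl
  exact (mem_graphFinset.1 this).symm

lemma card_graphFinset_inter (f g : ι → κ) :
    #(graphFinset f ∩ graphFinset g) = #{i | f i = g i} := by
  have : graphFinset f ∩ graphFinset g = ({i | f i = g i} : Finset ι).image fun i => (i, f i) := by
    ext ⟨i, k⟩
    simp only [mem_inter, mem_graphFinset, mem_image, mem_filter, mem_univ, true_and, Prod.ext_iff]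
    constructor
    · rintro ⟨rfl, h⟩
      exact ⟨i, h.symm, rfl, rfl⟩
    · rintro ⟨j, hj, rfl, rfl⟩
      exact ⟨rfl, hj.symm⟩
  rw [this, card_image_of_injective _ fun _ _ h => congrArg Prod.fst h]

lemma card_graphFinset (f : ι → κ) : #(graphFinset f) = card ι := by
  simpa using card_graphFinset_inter f f

end Graph

lemma exists_subfamily_powersetCard_inter_le {α : Type*} [DecidableEq α] (E : Finset α)
    {v m : ℕ} (hv : 0 < v) (hm : 0 < m) (hmv : m * v ≤ #E) :
    ∃ L ⊆ E.powersetCard v, (∀ E₁ ∈ L, ∀ E₂ ∈ L, E₁ ≠ E₂ → #(E₁ ∩ E₂) ≤ v / 2) ∧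
      m ^ (v / 2 + 1) ≤ #L * v.choose (v / 2 + 1) := by
  obtain ⟨e⟩ : Nonempty (Fin v × Fin m ↪ E) :=
    Function.Embedding.nonempty_of_card_le (by simpa [mul_comm] using hmv)
  have : Nonempty (Fin m) := ⟨⟨0, hm⟩⟩
  obtain ⟨F, hsep, hcard⟩ := exists_code_agree_lt (ι := Fin v) (κ := Fin m) (t := v / 2 + 1)
    (by simp only [Fintype.card_fin]; omega)
  let A : (Fin v → Fin m) → Finset α := fun f => ((graphFinset f).map e).map (.subtype _)
  have hA_inter (f g) : #(A f ∩ A g) = #{i | f i = g i} := by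
    simp only [A, ← map_inter, card_map, card_graphFinset_inter]
  have hA_inj : Function.Injective A :=
    (map_injective _).comp ((map_injective e).comp graphFinset_injective)
  refine ⟨F.image A, image_subset_iff.2 fun f _ => mem_powersetCard.2 ⟨?_, ?_⟩, ?_, ?_⟩
  · intro x hx
    obtain ⟨y, -, rfl⟩ := mem_map.1 hx
    exact y.2
  · simp [A, card_graphFinset]
  · simp only [mem_image]
    rintro _ ⟨f, hf, rfl⟩ _ ⟨g, hg, rfl⟩ hfg
    rw [hA_inter]
    exact Nat.le_of_lt_succ (hsep f hf g hg (ne_of_apply_ne A hfg))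
  · simpa [card_image_of_injective _ hA_inj] using hcard

lemma Nat.choose_le_exp_mul_pow {n k : ℕ} {x : ℝ} (hk : 0 < k) (hn : n ≤ x * k) :
    (n.choose k : ℝ) ≤ (exp 1 * x) ^ k := by
  have hchoose : (n.choose k : ℝ) ≤ n ^ k / k.factorial := Nat.choose_le_pow_div k n
  have hfact : (k : ℝ) ^ k / k.factorial ≤ exp 1 ^ k := by
    rw [exp_one_pow]; exact Real.pow_div_factorial_le_exp _ (Nat.cast_nonneg k) k
  have hkpos : (0 : ℝ) < (k : ℝ) ^ k := by positivity
  have hx : 0 ≤ x := nonneg_of_mul_nonneg_left ((Nat.cast_nonneg n).trans hn) (by positivity)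
  refine le_of_mul_le_mul_right ?_ hkpos
  calc (n.choose k : ℝ) * k ^ k ≤ n ^ k / k.factorial * (exp 1 ^ k * k.factorial) := by
        gcongr
        exact (div_le_iff₀ (by positivity)).1 hfact
    _ = exp 1 ^ k * n ^ k := by field_simp
    _ ≤ exp 1 ^ k * (x * k) ^ k := by gcongr
    _ = (exp 1 * x) ^ k * k ^ k := by ring

lemma choose_le_pow_four {n v m K : ℕ} (hn : n < (m + 1) * v)
    (hm : 16 * exp 1 * (m + 1) ≤ (m : ℝ) ^ 2) (hK : m ^ (v / 2 + 1) ≤ K * v.choose (v / 2 + 1)) :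
    (n.choose v : ℝ) ≤ (K : ℝ) ^ 4 := by
  have hv : 0 < v := Nat.pos_of_ne_zero fun h => by simp [h] at hn
  have hm1 : (1 : ℝ) ≤ m := by
    have : 0 < m := Nat.pos_of_ne_zero fun h => by
      simp only [h, CharP.cast_eq_zero] at hm; nlinarith [exp_pos 1]
    exact_mod_cast this
  have hK' : ((m ^ (v / 2 + 1) : ℕ) : ℝ) ≤ (K * 2 ^ v : ℕ) :=
    Nat.cast_le.2 (hK.trans (Nat.mul_le_mul_left _ (Nat.choose_le_two_pow _ _)))
  push_cast at hK'
  refine le_of_mul_le_mul_left ?_ (by positivity : (0 : ℝ) < 16 ^ v)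
  calc (16 : ℝ) ^ v * n.choose v ≤ 16 ^ v * (exp 1 * (m + 1)) ^ v := by
        gcongr
        exact Nat.choose_le_exp_mul_pow hv (by exact_mod_cast hn.le)
    _ = (16 * exp 1 * (m + 1)) ^ v := by rw [← mul_pow, mul_assoc]
    _ ≤ ((m : ℝ) ^ 2) ^ v := by gcongr
    _ ≤ ((m : ℝ) ^ (v / 2 + 1)) ^ 4 := by
        rw [← pow_mul, ← pow_mul]; exact pow_le_pow_right₀ hm1 (by omega)
    _ ≤ (K * 2 ^ v) ^ 4 := by gcongr
    _ = 16 ^ v * K ^ 4 := by rw [mul_pow, ← pow_mul, mul_comm v 4, pow_mul]; norm_num; ring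

/-- Lemma 2.6: if `64e³v ≤ #E` then among the `v`-element subsets of `E` there is a
subfamily `L` such that any two distinct members of `L` intersect in at most `v/2`
elements and `(#L)⁴ ≥ C(#E, v)`. -/
theorem exists_wellSeparated_family {α : Type*} [DecidableEq α] (E : Finset α) (v : ℕ)
    (h : 64 * Real.exp 3 * v ≤ (E.card : ℝ)) :
    ∃ L : Finset (Finset α), L ⊆ E.powersetCard v ∧
      (∀ E₁ ∈ L, ∀ E₂ ∈ L, E₁ ≠ E₂ → ((E₁ ∩ E₂).card : ℝ) ≤ (v : ℝ) / 2) ∧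
      ((E.powersetCard v).card : ℝ) ≤ ((L.card : ℝ)) ^ 4 ∧
      (E.powersetCard v).card = E.card.choose v := by
  rcases Nat.eq_zero_or_pos v with rfl | hv
  · exact ⟨E.powersetCard 0, subset_rfl, by simp, by simp, card_powersetCard 0 E⟩
  set m := #E / v
  have hn : #E < (m + 1) * v := by rw [add_mul, one_mul]; exact Nat.lt_div_mul_add hv
  have hm_large : 64 * exp 3 < m + 1 :=
    lt_of_mul_lt_mul_right (h.trans_lt (by exact_mod_cast hn)) (Nat.cast_nonneg v)
  have hm : 16 * exp 1 * (m + 1) ≤ (m : ℝ) ^ 2 := by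
    nlinarith [exp_one_lt_three, add_one_le_exp 3]
  have hm_pos : 0 < m := by
    have : (0 : ℝ) < m := by linarith [add_one_le_exp 3]
    exact_mod_cast this
  obtain ⟨L, hL, hsep, hK⟩ :=
    exists_subfamily_powersetCard_inter_le E hv hm_pos (Nat.div_mul_le_self _ _)
  refine ⟨L, hL, fun E₁ h₁ E₂ h₂ hne => ?_, ?_, card_powersetCard v E⟩
  · exact (Nat.cast_le.2 (hsep E₁ h₁ E₂ h₂ hne)).trans Nat.cast_div_le
  · rw [card_powersetCard]; exact choose_le_pow_four hn hm hK
end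

section
/- There are positive constants c₁, c₂ such that for any m, n ∈ ℕ with 2 ≤ n ≤ m ≤ 2ⁿ the following estimates hold: 2^{c₁·n} ≤ C(m,k) ≤ 2^{c₂·n}, where k is the smallest positive integer such that k ≥ n/(2·log₂(2m/n)) and C(m,k) is the binomial coefficient. -/
/-!
Put `L = log₂ (2m/n)`, so that `2 ^ L = 2m/n` and `1 ≤ L ≤ n`. Minimality of `k` gives
`n/2 ≤ kL < n/2 + L ≤ 3n/2` and `4k ≤ 3n`, hence `m/k = 2 ^ L · n/(2k)` lies between
`(2/3) · 2 ^ L` and `L · 2 ^ L`. The standard estimates `(m/k) ^ k ≤ C(m,k) ≤ (em/k) ^ k` then give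
`2 ^ (n/8) ≤ C(m,k) ≤ 2 ^ (9n/2)`.
-/

open Real

namespace Nat

theorem pow_le_pow_mul_choose {m k : ℕ} (hkm : k ≤ m) : m ^ k ≤ k ^ k * m.choose k := by
  have key : m ^ k * k ! ≤ k ^ k * m.descFactorial k :=
    calc m ^ k * k ! = ∏ i ∈ Finset.range k, m * (k - i) := by
          rw [Finset.prod_mul_distrib, Finset.prod_const, Finset.card_range,
            ← descFactorial_eq_prod_range, descFactorial_self]
      _ ≤ ∏ i ∈ Finset.range k, k * (m - i) := by
          refine Finset.prod_le_prod' fun i _ => ?_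
          rw [Nat.mul_sub, Nat.mul_sub, Nat.mul_comm m k]
          exact Nat.sub_le_sub_left (Nat.mul_le_mul_right i hkm) _
      _ = k ^ k * m.descFactorial k := by
          rw [Finset.prod_mul_distrib, Finset.prod_const, Finset.card_range,
            ← descFactorial_eq_prod_range]
  rw [descFactorial_eq_factorial_mul_choose, Nat.mul_left_comm] at key
  exact Nat.le_of_mul_le_mul_right (by simpa [Nat.mul_comm] using key) k.factorial_pos

theorem div_pow_le_choose {α : Type*} [Semifield α] [LinearOrder α] [IsStrictOrderedRing α]
    {m k : ℕ} (hkm : k ≤ m) : ((m : α) / k) ^ k ≤ m.choose k := by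
  rcases k.eq_zero_or_pos with rfl | hk
  · simp
  rw [div_pow, div_le_iff₀ (by positivity), mul_comm]
  exact_mod_cast pow_le_pow_mul_choose hkm

theorem choose_le_exp_one_mul_div_pow (m k : ℕ) :
    (m.choose k : ℝ) ≤ (exp 1 * m / k) ^ k := by
  rcases k.eq_zero_or_pos with rfl | hk
  · simp
  have hk' : (0 : ℝ) < k := by exact_mod_cast hk
  have hfact : ((k : ℝ) ^ k / k !) ≤ exp 1 ^ k := by
    simpa [← exp_nat_mul] using Real.pow_div_factorial_le_exp (k : ℝ) hk'.le k
  calc (m.choose k : ℝ) ≤ (m : ℝ) ^ k / k ! := by exact_mod_cast choose_le_pow_div k m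
    _ = ((m : ℝ) / k) ^ k * ((k : ℝ) ^ k / k !) := by
          rw [div_pow]; field_simp
    _ ≤ ((m : ℝ) / k) ^ k * exp 1 ^ k := by gcongr
    _ = (exp 1 * m / k) ^ k := by rw [← mul_pow, mul_comm, mul_div_assoc]

end Nat

theorem three_halves_mul_two_rpow_div_four_le {L : ℝ} (hL : 1 ≤ L) :
    3 / 2 * (2 : ℝ) ^ (L / 4) ≤ 2 ^ L := by
  have h : (3 / 2 : ℝ) ≤ 2 ^ (3 * L / 4) := by
    rw [rpow_def_of_pos two_pos]
    nlinarith [add_one_le_exp (log 2 * (3 * L / 4)), log_two_gt_d9]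
  calc 3 / 2 * (2 : ℝ) ^ (L / 4) ≤ 2 ^ (3 * L / 4) * 2 ^ (L / 4) := by gcongr
    _ = 2 ^ L := by rw [← rpow_add two_pos]; ring_nf

theorem exp_one_mul_le_two_rpow {L : ℝ} (hL : 0 ≤ L) : exp 1 * L ≤ 2 ^ (2 * L) := by
  calc exp 1 * L ≤ exp 1 * exp (L - 1) := by gcongr; linarith [add_one_le_exp (L - 1)]
    _ = exp L := by rw [← exp_add]; ring_nf
    _ ≤ 2 ^ (2 * L) := by
          rw [rpow_def_of_pos two_pos]
          gcongr
          nlinarith [log_two_gt_d9]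

theorem lt_add_one_of_forall_le {t : ℝ} {k : ℕ} (ht : 0 < t)
    (hmin : ∀ j : ℕ, 1 ≤ j → t ≤ j → k ≤ j) : (k : ℝ) < t + 1 :=
  calc (k : ℝ) ≤ ⌈t⌉₊ := mod_cast hmin _ (Nat.one_le_iff_ne_zero.2 (by positivity)) (Nat.le_ceil t)
    _ < t + 1 := Nat.ceil_lt_add_one ht.le

theorem four_mul_le_three_mul_of_forall_le {n k : ℕ} {L : ℝ} (hL : 1 ≤ L) (hn : 2 ≤ n)
    (hmin : ∀ j : ℕ, 1 ≤ j → (n : ℝ) / (2 * L) ≤ j → k ≤ j) : 4 * k ≤ 3 * n := by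
  have hn' : (2 : ℝ) ≤ n := by exact_mod_cast hn
  have hk : (k : ℝ) < n / (2 * L) + 1 := lt_add_one_of_forall_le (by positivity) hmin
  have ht : (n : ℝ) / (2 * L) ≤ n / 2 := by gcongr; linarith
  have : 2 * k < n + 2 := by exact_mod_cast (by linarith : (2 * k : ℝ) < n + 2)
  omega

theorem mul_le_three_halves_mul_of_forall_le {n k : ℕ} {L : ℝ} (hL : 0 < L) (hLn : L ≤ n)
    (hmin : ∀ j : ℕ, 1 ≤ j → (n : ℝ) / (2 * L) ≤ j → k ≤ j) : k * L ≤ 3 / 2 * n := by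
  have hn : (0 : ℝ) < n := hL.trans_le hLn
  have hk : (k : ℝ) < n / (2 * L) + 1 := lt_add_one_of_forall_le (by positivity) hmin
  calc (k : ℝ) * L ≤ (n / (2 * L) + 1) * L := by gcongr
    _ = n / 2 + L := by field_simp
    _ ≤ 3 / 2 * n := by linarith

theorem logb_two_mul_div_mem_Icc {m n : ℕ} (hn : 2 ≤ n) (hnm : n ≤ m) (hm : m ≤ 2 ^ n) :
    logb 2 (2 * m / n) ∈ Set.Icc 1 (n : ℝ) := by
  have hn' : (2 : ℝ) ≤ n := by exact_mod_cast hn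
  have hnm' : (n : ℝ) ≤ m := by exact_mod_cast hnm
  have hpos : (0 : ℝ) < 2 * m / n := div_pos (by linarith) (by linarith)
  constructor
  · rw [le_logb_iff_rpow_le one_lt_two hpos, rpow_one, le_div_iff₀ (by positivity)]
    linarith
  · rw [logb_le_iff_le_rpow one_lt_two hpos, rpow_natCast, div_le_iff₀ (by positivity)]
    calc 2 * (m : ℝ) ≤ m * n := by nlinarith
      _ ≤ 2 ^ n * n := by gcongr; exact_mod_cast hm

theorem div_eq_two_rpow_logb_mul {m n : ℕ} (k : ℕ) (hm : 0 < m) (hn : 0 < n) :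
    (m : ℝ) / k = 2 ^ logb 2 (2 * m / n) * (n / (2 * k)) := by
  rw [rpow_logb two_pos (by norm_num) (by positivity)]
  field_simp

theorem two_rpow_le_choose_of_le_div {m n k : ℕ} {L : ℝ} (hL : 1 ≤ L) (hkm : k ≤ m)
    (hmk : 2 / 3 * 2 ^ L ≤ (m : ℝ) / k) (hn : (n : ℝ) ≤ 2 * k * L) :
    (2 : ℝ) ^ (1 / 8 * (n : ℝ)) ≤ m.choose k :=
  calc (2 : ℝ) ^ (1 / 8 * (n : ℝ)) ≤ 2 ^ (L / 4 * k) :=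
        rpow_le_rpow_of_exponent_le one_le_two (by linarith)
    _ = (2 ^ (L / 4)) ^ k := rpow_mul_natCast zero_le_two _ _
    _ ≤ ((m : ℝ) / k) ^ k := by
        gcongr
        linarith [three_halves_mul_two_rpow_div_four_le hL]
    _ ≤ m.choose k := Nat.div_pow_le_choose hkm

theorem choose_le_two_rpow_of_div_le {m n k : ℕ} {L : ℝ} (hL : 0 ≤ L)
    (hmk : (m : ℝ) / k ≤ L * 2 ^ L) (hkL : k * L ≤ 3 / 2 * n) :
    (m.choose k : ℝ) ≤ 2 ^ (9 / 2 * (n : ℝ)) :=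
  calc (m.choose k : ℝ) ≤ (exp 1 * m / k) ^ k := Nat.choose_le_exp_one_mul_div_pow m k
    _ ≤ (2 ^ (3 * L)) ^ k := by
        gcongr
        calc exp 1 * m / k = exp 1 * (m / k) := mul_div_assoc _ _ _
          _ ≤ exp 1 * L * 2 ^ L := by rw [mul_assoc]; gcongr
          _ ≤ 2 ^ (2 * L) * 2 ^ L := by gcongr; exact exp_one_mul_le_two_rpow hL
          _ = 2 ^ (3 * L) := by rw [← rpow_add two_pos]; ring_nf
    _ = 2 ^ (3 * L * k) := (rpow_mul_natCast zero_le_two _ _).symm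
    _ ≤ 2 ^ (9 / 2 * (n : ℝ)) := rpow_le_rpow_of_exponent_le one_le_two (by linarith)

/-- Lemma 3.1(ii): there are positive constants `c₁, c₂` such that for all `m, n` with
`2 ≤ n ≤ m ≤ 2^n`, if `k` is the smallest positive integer with
`k ≥ n / (2 log₂(2m/n))`, then `2^(c₁ n) ≤ C(m,k) ≤ 2^(c₂ n)`. -/
theorem choose_two_pow_bounds :
    ∃ c₁ c₂ : ℝ, 0 < c₁ ∧ 0 < c₂ ∧
      ∀ m n k : ℕ, 2 ≤ n → n ≤ m → m ≤ 2 ^ n →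
        (1 ≤ k ∧ (n : ℝ) / (2 * Real.logb 2 (2 * m / n)) ≤ (k : ℝ) ∧
          (∀ j : ℕ, 1 ≤ j → (n : ℝ) / (2 * Real.logb 2 (2 * m / n)) ≤ (j : ℝ) → k ≤ j)) →
        (2 : ℝ) ^ (c₁ * (n : ℝ)) ≤ (m.choose k : ℝ) ∧
          (m.choose k : ℝ) ≤ (2 : ℝ) ^ (c₂ * (n : ℝ)) := by
  refine ⟨1 / 8, 9 / 2, by norm_num, by norm_num, ?_⟩
  rintro m n k hn hnm hm ⟨hk, hkt, hmin⟩
  obtain ⟨hL, hLn⟩ := logb_two_mul_div_mem_Icc hn hnm hm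
  have hmk := div_eq_two_rpow_logb_mul k (by omega : 0 < m) (by omega : 0 < n)
  set L := logb 2 (2 * m / n)
  have hk' : (1 : ℝ) ≤ k := by exact_mod_cast hk
  have hnk : (n : ℝ) ≤ 2 * k * L := by
    rw [div_le_iff₀ (by positivity)] at hkt
    linarith
  have h4k := four_mul_le_three_mul_of_forall_le hL hn hmin
  constructor
  · have h4k' : (4 * k : ℝ) ≤ 3 * n := by exact_mod_cast h4k
    have h23 : (2 / 3 : ℝ) ≤ n / (2 * k) := by
      rw [le_div_iff₀ (by positivity)]
      linarith
    refine two_rpow_le_choose_of_le_div hL (by omega) ?_ hnk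
    rw [hmk, mul_comm]
    exact mul_le_mul_of_nonneg_left h23 (by positivity)
  · have hnkL : (n : ℝ) / (2 * k) ≤ L := by
      rw [div_le_iff₀ (by positivity)]
      linarith
    refine choose_le_two_rpow_of_div_le (zero_le_one.trans hL) ?_
      (mul_le_three_halves_mul_of_forall_le (by linarith) hLn hmin)
    rw [hmk, mul_comm]
    exact mul_le_mul_of_nonneg_right hnkL (by positivity)
end

section
/- Let 1 ≤ p < q ≤ ∞ and put α = 1/p − 1/q (with the convention 1/∞ = 0), and let b ∈ ℕ. Then there is a positive constant C, depending only on p, q and b, such that for every n ∈ ℕ, all Banach spaces X, Y and every bounded linear operator T₀ from X to Y, the diagonal operator T(n) : ℓ_p^n(X) → ℓ_q^n(Y) defined by T(n)(x₁, …, x_n) = (T₀(x₁), …, T₀(x_n)) satisfies f_{nb}(T(n)) ≥ C·‖T₀‖·n^{−α}. -/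
open Metric Set
open scoped ENNReal

/-! Choose `x₀` in the unit ball with `‖T₀ x₀‖ ≥ ‖T₀‖ / 2` and a code of `2 ^ (nb - 1) + 1`
words in `{0, …, K - 1}ⁿ`, `K = 2 ^ (2b + 4)`, with pairwise Hamming distances at least `n / 2`.
Such a code exists by the Gilbert–Varshamov greedy argument, since a Hamming ball of radius
`(n - 1) / 2` has at most `2ⁿ K ^ ((n - 1) / 2)` points. The word `w` is sent to the point
`(w k / (K n ^ (1/p)) • x₀)ₖ` of the unit ball of `ℓ_p^n(X)`. The images under `T(n)` of two
distinct such points differ by at least `‖T₀ x₀‖ / (K n ^ (1/p))` in at least `n / 2`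
coordinates, hence are at `ℓ_q`-distance at least `(n / 2) ^ (1/q) ‖T₀‖ / (2 K n ^ (1/p))`. -/

open Finset

theorem Finset.exists_subset_pairwise_not_rel_card_le_mul {α : Type*} (r : α → α → Prop)
    [DecidableRel r] (hrefl : ∀ a, r a a) (hsymm : ∀ a b, r a b → r b a) {B : ℕ}
    (A : Finset α) (hB : ∀ a ∈ A, #{x ∈ A | r x a} ≤ B) :
    ∃ S ⊆ A, (S : Set α).Pairwise (fun x y => ¬ r x y) ∧ #A ≤ #S * B := by
  classical
  induction A using Finset.strongInduction with
  | H A ih =>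
    obtain rfl | ⟨a, ha⟩ := A.eq_empty_or_nonempty
    · exact ⟨∅, subset_refl _, by simp⟩
    -- greedy step: keep `a` and discard everything `r`-related to it
    set A' := {x ∈ A | ¬ r x a}
    have hA' : A' ⊂ A := filter_ssubset.2 ⟨a, ha, not_not.2 (hrefl a)⟩
    obtain ⟨S, hSA', hS, hcard⟩ := ih A' hA' fun x hx =>
      (card_le_card (filter_subset_filter _ (filter_subset _ _))).trans
        (hB x (filter_subset _ _ hx))
    have hfar : ∀ x ∈ S, ¬ r x a := fun x hx => (mem_filter.1 (hSA' hx)).2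
    refine ⟨insert a S, insert_subset ha (hSA'.trans hA'.subset), ?_, ?_⟩
    · rw [coe_insert]
      exact hS.insert fun x hx _ => ⟨fun h => hfar x hx (hsymm _ _ h), hfar x hx⟩
    · have hsplit := card_filter_add_card_filter_not (s := A) (p := fun x => r x a)
      have := hB a ha
      rw [card_insert_of_notMem fun h => hfar a h (hrefl a), add_mul]
      nlinarith

section Hamming

variable {ι β : Type*} [Fintype ι] [DecidableEq ι] [Fintype β] [DecidableEq β]

theorem card_hammingDist_le_le [Nonempty β] (a : ι → β) (r : ℕ) :
    #{x | hammingDist x a ≤ r} ≤ 2 ^ Fintype.card ι * Fintype.card β ^ r := by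
  let cube (s : Finset ι) : Finset (ι → β) :=
    Fintype.piFinset fun i => if i ∈ s then univ else {a i}
  have hcube : ∀ s ∈ (univ : Finset ι).powerset.filter (#· ≤ r),
      #(cube s) ≤ Fintype.card β ^ r := by
    intro s hs
    simp only [cube, Fintype.card_piFinset, apply_ite card, card_univ, Finset.card_singleton,
      prod_ite_mem, Finset.univ_inter, prod_const]
    exact Nat.pow_le_pow_right Fintype.card_pos (mem_filter.1 hs).2
  calc #{x | hammingDist x a ≤ r}
      ≤ #(((univ : Finset ι).powerset.filter (#· ≤ r)).biUnion cube) := by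
        refine card_le_card fun x hx => mem_biUnion.2 ⟨univ.filter fun i => x i ≠ a i, ?_, ?_⟩
        · simpa [hammingDist] using hx
        · simp only [cube, Fintype.mem_piFinset]
          intro i
          split_ifs with h <;> simp_all
    _ ≤ ∑ s ∈ (univ : Finset ι).powerset.filter (#· ≤ r), #(cube s) := card_biUnion_le
    _ ≤ ∑ s ∈ (univ : Finset ι).powerset, Fintype.card β ^ r :=
        (sum_le_sum hcube).trans (sum_le_sum_of_subset (filter_subset _ _))
    _ = 2 ^ Fintype.card ι * Fintype.card β ^ r := by simp

theorem exists_finset_pairwise_lt_hammingDist [Nonempty β] (r : ℕ) :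
    ∃ S : Finset (ι → β), (S : Set (ι → β)).Pairwise (fun x y => r < hammingDist x y) ∧
      Fintype.card β ^ Fintype.card ι ≤ #S * (2 ^ Fintype.card ι * Fintype.card β ^ r) := by
  obtain ⟨S, -, hS, hcard⟩ := exists_subset_pairwise_not_rel_card_le_mul
    (fun x y : ι → β => hammingDist x y ≤ r) (by simp) (fun x y h => hammingDist_comm x y ▸ h)
    Finset.univ fun a _ => by simpa using card_hammingDist_le_le a r
  exact ⟨S, hS.mono' fun x y h => not_le.1 h, by simpa using hcard⟩

end Hamming

theorem exists_pairwise_half_le_hammingDist (n b : ℕ) (hn : 1 ≤ n) :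
    ∃ c : Fin (2 ^ (n * b - 1) + 1) → Fin n → Fin (2 ^ (2 * b + 4)),
      Pairwise fun i j => (n + 1) / 2 ≤ hammingDist (c i) (c j) := by
  set K := 2 ^ (2 * b + 4)
  set r := (n - 1) / 2
  obtain ⟨S, hS, hcard⟩ := exists_finset_pairwise_lt_hammingDist (ι := Fin n) (β := Fin K) r
  simp only [Fintype.card_fin] at hcard
  have hsize : (2 ^ (n * b - 1) + 1) * (2 ^ n * K ^ r) ≤ K ^ n := by
    have hexp : n * b + 1 + n + (2 * b + 4) * r ≤ (2 * b + 4) * n := by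
      have : 2 * r + 1 ≤ n := by omega
      nlinarith
    calc (2 ^ (n * b - 1) + 1) * (2 ^ n * K ^ r) ≤ 2 ^ (n * b + 1) * (2 ^ n * K ^ r) := by
          gcongr
          have := Nat.pow_le_pow_right two_pos (Nat.sub_le (n * b) 1)
          have := Nat.one_le_two_pow (n := n * b)
          rw [pow_succ]
          omega
      _ = 2 ^ (n * b + 1 + n + (2 * b + 4) * r) := by
          simp only [K, ← pow_mul, ← pow_add, add_assoc]
      _ ≤ 2 ^ ((2 * b + 4) * n) := Nat.pow_le_pow_right two_pos hexp
      _ = K ^ n := pow_mul _ _ _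
  obtain ⟨e⟩ := Function.Embedding.nonempty_of_card_le (α := Fin (2 ^ (n * b - 1) + 1)) (β := S)
    (by simpa using Nat.le_of_mul_le_mul_right (hsize.trans hcard) (by positivity))
  refine ⟨fun i => e i, fun i j hij => ?_⟩
  have := hS (e i).2 (e j).2 (Subtype.coe_injective.ne (e.injective.ne hij))
  dsimp only
  omega

namespace PiLp

variable {ι : Type*} [Fintype ι] {p : ℝ≥0∞} [Fact (1 ≤ p)] {β : ι → Type*}
  [∀ i, SeminormedAddCommGroup (β i)]

theorem norm_le_card_rpow_mul (x : PiLp p β) {c : ℝ} (hc : 0 ≤ c) (h : ∀ i, ‖x i‖ ≤ c) :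
    ‖x‖ ≤ (Fintype.card ι : ℝ) ^ (1 / p.toReal) * c := by
  have := (antilipschitzWith_ofLp p β).le_mul_dist x 0
  rw [dist_zero_right, WithLp.ofLp_zero, dist_zero_right, ENNReal.toReal_div,
    ENNReal.toReal_one] at this
  push_cast at this
  exact this.trans (mul_le_mul_of_nonneg_left ((pi_norm_le_iff_of_nonneg hc).2 h) (by positivity))

theorem card_rpow_mul_le_norm_s15 (x : PiLp p β) {s : Finset ι} (hs : s.Nonempty) {c : ℝ}
    (hc : 0 ≤ c) (h : ∀ i ∈ s, c ≤ ‖x i‖) :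
    (s.card : ℝ) ^ (1 / p.toReal) * c ≤ ‖x‖ := by
  rcases p.dichotomy with rfl | hp
  · obtain ⟨i, hi⟩ := hs
    simpa using (h i hi).trans (norm_apply_le x i)
  have hp0 : 0 < p.toReal := zero_lt_one.trans_le hp
  rw [norm_eq_sum hp0]
  calc (s.card : ℝ) ^ (1 / p.toReal) * c = (∑ _i ∈ s, c ^ p.toReal) ^ (1 / p.toReal) := by
        rw [Finset.sum_const, nsmul_eq_mul, Real.mul_rpow (by positivity) (by positivity),
          one_div, Real.rpow_rpow_inv hc hp0.ne']
    _ ≤ (∑ i ∈ s, ‖x i‖ ^ p.toReal) ^ (1 / p.toReal) := by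
        gcongr with i hi
        exact h i hi
    _ ≤ (∑ i, ‖x i‖ ^ p.toReal) ^ (1 / p.toReal) := by
        gcongr
        exact Finset.subset_univ s

end PiLp

section InnerEntropy

variable {X Y : Type*} [NormedAddCommGroup X] [NormedSpace ℝ X]
  [NormedAddCommGroup Y] [NormedSpace ℝ Y]

theorem ContinuousLinearMap.exists_norm_le_one_half_opNorm_le (T : X →L[ℝ] Y) :
    ∃ x, ‖x‖ ≤ 1 ∧ ‖T‖ / 2 ≤ ‖T x‖ := by
  rcases (norm_nonneg T).eq_or_lt with h | h
  · exact ⟨0, by simp, by simp [← h]⟩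
  · obtain ⟨x, hx, hTx⟩ := T.exists_lt_apply_of_lt_opNorm (half_lt_self h)
    exact ⟨x, hx.le, hTx.le⟩

theorem le_innerEntropyNum {n : ℕ} {T : X →L[ℝ] Y} {ε : ℝ} (hε : 0 ≤ ε)
    (x : Fin (2 ^ (n - 1) + 1) → X) (hx : ∀ i, ‖x i‖ ≤ 1)
    (hsep : ∀ i j, i ≠ j → 2 * ε ≤ ‖T (x i) - T (x j)‖) : ε ≤ innerEntropyNum n T := by
  rcases hε.eq_or_lt with rfl | hε
  · exact Real.sSup_nonneg fun _ h => h.1.le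
  refine le_csSup ⟨‖T‖, ?_⟩ ⟨hε, x, hx, hsep⟩
  rintro e ⟨-, y, hy, hsep'⟩
  have hne : (0 : Fin (2 ^ (n - 1) + 1)) ≠ Fin.last _ := (Fin.last_pos' ..).ne
  have := hsep' _ _ hne
  have : ‖T (y 0) - T (y (Fin.last _))‖ ≤ ‖T‖ * 2 := by
    rw [← map_sub]
    refine T.le_opNorm_of_le ((norm_sub_le _ _).trans ?_)
    linarith [hy 0, hy (Fin.last _)]
  linarith

theorem le_innerEntropyNum_diagonal_of_pairwise_le_hammingDist {ι : Type*} [Fintype ι]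
    {p q : ℝ≥0∞} [Fact (1 ≤ p)] [Fact (1 ≤ q)] (T0 : X →L[ℝ] Y)
    (T : PiLp p (fun _ : ι => X) →L[ℝ] PiLp q (fun _ : ι => Y))
    (hT : ∀ x i, T x i = T0 (x i)) {m K d : ℕ} (c : Fin (2 ^ (m - 1) + 1) → ι → Fin K)
    (hc : Pairwise fun i j => d ≤ hammingDist (c i) (c j)) (hd : 0 < d) {x0 : X}
    (hx0 : ‖x0‖ ≤ 1) :
    (d : ℝ) ^ (1 / q.toReal) * ‖T0 x0‖ / (2 * K * (Fintype.card ι : ℝ) ^ (1 / p.toReal))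
      ≤ innerEntropyNum m T := by
  set δ : ℝ := (K * (Fintype.card ι : ℝ) ^ (1 / p.toReal))⁻¹
  have hδ : 0 ≤ δ := by positivity
  let x i : PiLp p (fun _ : ι => X) := WithLp.toLp p fun k => ((c i k : ℕ) * δ) • x0
  refine le_innerEntropyNum (by positivity) x (fun i => ?_) (fun i j hij => ?_)
  · calc ‖x i‖ ≤ (Fintype.card ι : ℝ) ^ (1 / p.toReal) * (K * δ) := by
          refine PiLp.norm_le_card_rpow_mul _ (by positivity) fun k => ?_
          rw [norm_smul, Real.norm_eq_abs, abs_of_nonneg (by positivity), ← mul_one (K * δ)]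
          gcongr
          exact_mod_cast (c i k).is_lt.le
      _ ≤ 1 := by
        rw [← mul_assoc, mul_comm _ (K : ℝ)]
        exact mul_inv_le_one
  · set s : Finset ι := {k | c i k ≠ c j k}
    have hcoord : ∀ k ∈ s, δ * ‖T0 x0‖ ≤ ‖(T (x i) - T (x j)) k‖ := by
      intro k hk
      have hne : (c i k : ℤ) ≠ c j k := by simpa [s, Fin.val_inj] using hk
      have hdiff : (T (x i) - T (x j)) k = (((c i k : ℕ) - (c j k : ℕ) : ℝ) * δ) • T0 x0 := by
        simp only [PiLp.sub_apply, hT, x, map_smul, ← sub_smul, ← sub_mul]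
      rw [hdiff, norm_smul, Real.norm_eq_abs, abs_mul, abs_of_nonneg hδ, mul_assoc]
      refine le_mul_of_one_le_left (by positivity) ?_
      exact_mod_cast Int.one_le_abs (sub_ne_zero.2 hne)
    have hs : d ≤ s.card := hc hij
    calc 2 * ((d : ℝ) ^ (1 / q.toReal) * ‖T0 x0‖
          / (2 * K * (Fintype.card ι : ℝ) ^ (1 / p.toReal)))
        = (d : ℝ) ^ (1 / q.toReal) * (δ * ‖T0 x0‖) := by
          simp only [δ]
          ring
      _ ≤ (s.card : ℝ) ^ (1 / q.toReal) * (δ * ‖T0 x0‖) := by gcongr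
      _ ≤ ‖T (x i) - T (x j)‖ :=
        PiLp.card_rpow_mul_le_norm_s15 _ (Finset.card_pos.1 (hd.trans_le hs)) (by positivity) hcoord

end InnerEntropy

theorem rpow_div_two_le_rpow {x y t : ℝ} (hx : 0 ≤ x) (hxy : x / 2 ≤ y) (ht₀ : 0 ≤ t)
    (ht₁ : t ≤ 1) : x ^ t / 2 ≤ y ^ t :=
  calc x ^ t / 2 ≤ x ^ t / 2 ^ t := by
        gcongr
        exact (Real.rpow_le_rpow_of_exponent_le one_le_two ht₁).trans_eq (Real.rpow_one 2)
    _ = (x / 2) ^ t := (Real.div_rpow hx zero_le_two t).symm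
    _ ≤ y ^ t := by gcongr

theorem inner_entropy_diagonal_lower_general (p q : ℝ≥0∞) [Fact (1 ≤ p)] [Fact (1 ≤ q)] (b : ℕ) :
    ∃ C : ℝ, 0 < C ∧
      ∀ (n : ℕ) (hn : 1 ≤ n)
        (X Y : Type) [NormedAddCommGroup X] [NormedSpace ℝ X]
        [NormedAddCommGroup Y] [NormedSpace ℝ Y]
        (T0 : X →L[ℝ] Y)
        (T : PiLp p (fun _ : Fin n => X) →L[ℝ] PiLp q (fun _ : Fin n => Y)),
        (∀ x i, T x i = T0 (x i)) →
        C * ‖T0‖ * (n : ℝ) ^ (-(1 / p.toReal - 1 / q.toReal)) ≤ innerEntropyNum (n * b) T := by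
  set K : ℕ := 2 ^ (2 * b + 4)
  refine ⟨(8 * K : ℝ)⁻¹, by positivity, fun n hn X Y _ _ _ _ T0 T hT => ?_⟩
  obtain ⟨x0, hx0, hTx0⟩ := T0.exists_norm_le_one_half_opNorm_le
  obtain ⟨c, hc⟩ := exists_pairwise_half_le_hammingDist n b hn
  have hn₀ : (0 : ℝ) < n := by exact_mod_cast hn
  have hq : 1 / q.toReal ≤ 1 := by
    rcases q.dichotomy with rfl | hq
    · simp
    · exact div_le_one_of_le₀ hq (by positivity)
  have hd : (n : ℝ) ^ (1 / q.toReal) / 2 ≤ (((n + 1) / 2 : ℕ) : ℝ) ^ (1 / q.toReal) := by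
    refine rpow_div_two_le_rpow hn₀.le ?_ (by positivity) hq
    rw [div_le_iff₀ two_pos]
    exact_mod_cast (by omega : n ≤ (n + 1) / 2 * 2)
  calc (8 * K : ℝ)⁻¹ * ‖T0‖ * (n : ℝ) ^ (-(1 / p.toReal - 1 / q.toReal))
      = (n : ℝ) ^ (1 / q.toReal) / 2 * (‖T0‖ / 2) / (2 * K * (n : ℝ) ^ (1 / p.toReal)) := by
        rw [neg_sub, Real.rpow_sub hn₀]
        field_simp
        ring
    _ ≤ (((n + 1) / 2 : ℕ) : ℝ) ^ (1 / q.toReal) * ‖T0 x0‖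
          / (2 * K * (n : ℝ) ^ (1 / p.toReal)) := by gcongr
    _ ≤ innerEntropyNum (n * b) T := by
        simpa only [Fintype.card_fin] using
          le_innerEntropyNum_diagonal_of_pairwise_le_hammingDist T0 T hT c hc (by omega) hx0

/-- For every `b ∈ ℕ` there is a constant `C > 0`, depending only on `p`, `q` and `b`,
such that the diagonal operator `T(n) = (T₀, …, T₀) : ℓ_p^n(X) → ℓ_q^n(Y)` satisfies
`f_{nb}(T(n)) ≥ C ‖T₀‖ n^{-α}` with `α = 1/p - 1/q`. -/
theorem inner_entropy_diagonal_lower (p q : ℝ≥0∞) [Fact (1 ≤ p)] [Fact (1 ≤ q)]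
    (hpq : p < q) (b : ℕ) (hb : 1 ≤ b) :
    ∃ C : ℝ, 0 < C ∧
      ∀ (n : ℕ) (hn : 1 ≤ n)
        (X Y : Type) [NormedAddCommGroup X] [NormedSpace ℝ X]
        [NormedAddCommGroup Y] [NormedSpace ℝ Y]
        (T0 : X →L[ℝ] Y)
        (T : PiLp p (fun _ : Fin n => X) →L[ℝ] PiLp q (fun _ : Fin n => Y)),
        (∀ x i, T x i = T0 (x i)) →
        C * ‖T0‖ * (n : ℝ) ^ (-(1 / p.toReal - 1 / q.toReal)) ≤ innerEntropyNum (n * b) T :=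
  inner_entropy_diagonal_lower_general p q b
end
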